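/- Barycentric projection decreases cost: let α ∈ H^1(μ₁,μ₂) with disintegration α = ∫ α_{x₁,x₂} dγ(x₁,x₂) (γ the pushforward under the base-point projections, α_{x₁,x₂} probabilities on R₊²), and define the barycentric projection α_b as the pushforward of γ under (x₁,x₂) ↦ ([x₁,ρ₁(x₁,x₂)],[x₂,ρ₂(x₁,x₂)]) with ρ_i the barycenters ∫ r_i dα_{x₁,x₂}. Then α_b ∈ H^1(μ₁,μ₂), and if H is proper, radially 1-homogeneous, lsc and radially convex then ∫H dα_b ≤ ∫H dα. -/

import Mathlib

open MeasureTheory Topology Filter Set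
open scoped NNReal ENNReal BoundedContinuousFunction

noncomputable section

namespace UOT

variable (X : Type*)

/-- The equivalence relation on `X × ℝ≥0` identifying all points with radius `0`. -/
def coneSetoid : Setoid (X × ℝ≥0) where
  r p q := p = q ∨ (p.2 = 0 ∧ q.2 = 0)
  iseqv := by
    refine ⟨fun p => Or.inl rfl, ?_, ?_⟩
    · rintro p q (rfl | h)
      · exact Or.inl rfl
      · exact Or.inr ⟨h.2, h.1⟩
    · rintro p q r hpq hqr
      rcases hpq with rfl | h
      · exact hqr
      · rcases hqr with rfl | h'
        · exact Or.inr h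
        · exact Or.inr ⟨h.1, h'.2⟩

/-- The geometric cone over `X`. -/
def Cone := Quotient (coneSetoid X)

/-- The canonical map sending `(x, r)` to the point `[x, r]` of the cone. -/
def Cone.mk (x : X) (r : ℝ≥0) : Cone X := Quotient.mk (coneSetoid X) (x, r)

/-- The vertex `o` of the cone. -/
def Cone.vertex [Nonempty X] : Cone X := Cone.mk X (Classical.arbitrary X) 0

/-- The radial coordinate `r` of a point of the cone. -/
def Cone.radius : Cone X → ℝ≥0 :=
  Quotient.lift (fun p => p.2) (by
    rintro p q (rfl | ⟨h1, h2⟩)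
    · rfl
    · simp [h1, h2])

/-- The base point `x` of a point of the cone (an arbitrary point of `X` at the vertex). -/
def Cone.basePt [Nonempty X] : Cone X → X :=
  Quotient.lift (fun p => if p.2 = 0 then Classical.arbitrary X else p.1) (by
    rintro p q (rfl | ⟨h1, h2⟩)
    · rfl
    · simp [h1, h2])

/-- Radial rescaling `λ • [x, r] = [x, λ * r]` on the cone. -/
def Cone.smul (c : ℝ≥0) : Cone X → Cone X :=
  Quotient.lift (fun p => Cone.mk X p.1 (c * p.2)) (by
    rintro p q (rfl | ⟨h1, h2⟩)
    · rfl
    · apply Quotient.sound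
      exact Or.inr ⟨by simp [h1], by simp [h2]⟩)

variable [TopologicalSpace X]

/-- The cone topology: a set is open iff its preimage in `X × ℝ≥0` is open and, when it
contains the vertex, it contains a whole strip `{[x, r] : r < ε}`. -/
instance : TopologicalSpace (Cone X) where
  IsOpen U := IsOpen ((fun p : X × ℝ≥0 => Cone.mk X p.1 p.2) ⁻¹' U) ∧
      ∀ x : X, Cone.mk X x 0 ∈ U →
        ∃ ε : ℝ≥0, 0 < ε ∧ ∀ (y : X) (r : ℝ≥0), r < ε → Cone.mk X y r ∈ U
  isOpen_univ := ⟨isOpen_univ, fun _ _ => ⟨1, one_pos, fun _ _ _ => mem_univ _⟩⟩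
  isOpen_inter := by
    rintro s t ⟨hs1, hs2⟩ ⟨ht1, ht2⟩
    refine ⟨hs1.inter ht1, fun x hx => ?_⟩
    obtain ⟨ε₁, hε₁, h₁⟩ := hs2 x hx.1
    obtain ⟨ε₂, hε₂, h₂⟩ := ht2 x hx.2
    exact ⟨min ε₁ ε₂, lt_min hε₁ hε₂, fun y r hr =>
      ⟨h₁ y r (hr.trans_le (min_le_left _ _)), h₂ y r (hr.trans_le (min_le_right _ _))⟩⟩
  isOpen_sUnion := by
    intro S hS
    constructor
    · rw [Set.preimage_sUnion]
      exact isOpen_biUnion fun t ht => (hS t ht).1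
    · intro x hx
      obtain ⟨t, ht, hxt⟩ := hx
      obtain ⟨ε, hε, h⟩ := (hS t ht).2 x hxt
      exact ⟨ε, hε, fun y r hr => ⟨t, ht, h y r hr⟩⟩

instance : MeasurableSpace (Cone X) := borel (Cone X)

instance : BorelSpace (Cone X) := ⟨rfl⟩

/-- On a product of cones we use the Borel σ-algebra of the product topology. -/
instance (priority := 2000) prodConeMeasurableSpace (X₁ X₂ : Type*) [TopologicalSpace X₁]
    [TopologicalSpace X₂] : MeasurableSpace (Cone X₁ × Cone X₂) :=
  borel (Cone X₁ × Cone X₂)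

instance (priority := 2000) prodConeBorelSpace (X₁ X₂ : Type*) [TopologicalSpace X₁]
    [TopologicalSpace X₂] : BorelSpace (Cone X₁ × Cone X₂) := ⟨rfl⟩

variable {X}

/-- The scaled Dirac measure `r • δ_x` as a finite measure. -/
def diracFM {Y : Type*} [MeasurableSpace Y] (x : Y) : FiniteMeasure Y :=
  ⟨Measure.dirac x, inferInstance⟩

/-- The canonical map `[x, r] ↦ r • δ_x` from the cone to finite measures. -/
def coneToFM (X : Type*) [TopologicalSpace X] [MeasurableSpace X] :
    Cone X → FiniteMeasure X :=
  Quotient.lift (fun p : X × ℝ≥0 => p.2 • diracFM p.1) (by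
    rintro p q (rfl | ⟨h1, h2⟩)
    · rfl
    · simp [h1, h2])

/-- A finite measure is discrete if it is a finite nonnegative combination of Dirac masses. -/
def IsDiscreteFM {Y : Type*} [MeasurableSpace Y] (μ : FiniteMeasure Y) : Prop :=
  ∃ (n : ℕ) (c : Fin n → ℝ≥0) (x : Fin n → Y), μ = ∑ i, c i • diracFM (x i)

section Product

variable {X₁ X₂ : Type*} [TopologicalSpace X₁] [TopologicalSpace X₂]

/-- Radial `1`-homogeneity of a cost function on the product cone. -/
def RadiallyHomogeneous (H : Cone X₁ × Cone X₂ → ℝ≥0∞) : Prop :=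
  ∀ (x₁ : X₁) (x₂ : X₂) (r₁ r₂ lam : ℝ≥0), 0 < lam →
    H (Cone.mk X₁ x₁ (lam * r₁), Cone.mk X₂ x₂ (lam * r₂)) =
      (lam : ℝ≥0∞) * H (Cone.mk X₁ x₁ r₁, Cone.mk X₂ x₂ r₂)

/-- Radial convexity of a cost function on the product cone: every radial section is convex. -/
def RadiallyConvex (H : Cone X₁ × Cone X₂ → ℝ≥0∞) : Prop :=
  ∀ (x₁ : X₁) (x₂ : X₂) (a₁ a₂ b₁ b₂ t : ℝ≥0), t ≤ 1 →
    H (Cone.mk X₁ x₁ (t * a₁ + (1 - t) * b₁), Cone.mk X₂ x₂ (t * a₂ + (1 - t) * b₂)) ≤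
      (t : ℝ≥0∞) * H (Cone.mk X₁ x₁ a₁, Cone.mk X₂ x₂ a₂) +
        ((1 - t : ℝ≥0) : ℝ≥0∞) * H (Cone.mk X₁ x₁ b₁, Cone.mk X₂ x₂ b₂)

/-- Properness: `H` is not identically `+∞`. -/
def ProperCost (H : Cone X₁ × Cone X₂ → ℝ≥0∞) : Prop := ∃ y, H y ≠ ⊤

variable [MeasurableSpace X₁] [MeasurableSpace X₂]

/-- First `p`-homogeneous marginal `h₁^p(α) = (x₁)_♯ (r₁^p · α)`. -/
def homMarginalFst [Nonempty X₁] (p : ℝ) (α : Measure (Cone X₁ × Cone X₂)) : Measure X₁ :=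
  Measure.map (fun y : Cone X₁ × Cone X₂ => Cone.basePt X₁ y.1)
    (α.withDensity fun y => (Cone.radius X₁ y.1 : ℝ≥0∞) ^ p)

/-- Second `p`-homogeneous marginal `h₂^p(α) = (x₂)_♯ (r₂^p · α)`. -/
def homMarginalSnd [Nonempty X₂] (p : ℝ) (α : Measure (Cone X₁ × Cone X₂)) : Measure X₂ :=
  Measure.map (fun y : Cone X₁ × Cone X₂ => Cone.basePt X₂ y.2)
    (α.withDensity fun y => (Cone.radius X₂ y.2 : ℝ≥0∞) ^ p)

variable [Nonempty X₁] [Nonempty X₂]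

/-- `α ∈ H^p(μ₁, μ₂)`: a (finite Radon) homogeneous coupling with finite `p`-th radial
moments and `p`-homogeneous marginals `μ₁, μ₂`. -/
def IsHomCoupling (p : ℝ) (α : Measure (Cone X₁ × Cone X₂))
    (μ₁ : Measure X₁) (μ₂ : Measure X₂) : Prop :=
  IsFiniteMeasure α ∧
    (∫⁻ y, ((Cone.radius X₁ y.1 : ℝ≥0∞) ^ p + (Cone.radius X₂ y.2 : ℝ≥0∞) ^ p) ∂α) ≠ ⊤ ∧
    homMarginalFst p α = μ₁ ∧ homMarginalSnd p α = μ₂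

/-- The unbalanced optimal transport cost `U_H`. -/
def UH (H : Cone X₁ × Cone X₂ → ℝ≥0∞) (μ₁ : Measure X₁) (μ₂ : Measure X₂) : ℝ≥0∞ :=
  ⨅ (α : Measure (Cone X₁ × Cone X₂)) (_ : IsHomCoupling 1 α μ₁ μ₂), ∫⁻ y, H y ∂α

/-- The truncated product cone `C_R[X₁, X₂]`: both radii at most `R`. -/
def prodConeTrunc (R : ℝ≥0) : Set (Cone X₁ × Cone X₂) :=
  {y | Cone.radius X₁ y.1 ≤ R ∧ Cone.radius X₂ y.2 ≤ R}

/-- Membership of a pair of bounded continuous potentials in the dual constraint set `Φ_H`. -/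
def InPhi (H : Cone X₁ × Cone X₂ → ℝ≥0∞) (φ₁ : X₁ →ᵇ ℝ) (φ₂ : X₂ →ᵇ ℝ) : Prop :=
  ∀ (x₁ : X₁) (x₂ : X₂) (r₁ r₂ : ℝ≥0),
    ENNReal.ofReal (φ₁ x₁ * r₁ + φ₂ x₂ * r₂) ≤ H (Cone.mk X₁ x₁ r₁, Cone.mk X₂ x₂ r₂)

/-- `H`-cyclical monotonicity of a subset of the product cone. -/
def HCyclicallyMonotone (H : Cone X₁ × Cone X₂ → ℝ≥0∞)
    (Γ : Set (Cone X₁ × Cone X₂)) : Prop :=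
  ∀ (N : ℕ) (y : Fin N → Cone X₁ × Cone X₂), (∀ i, y i ∈ Γ) → ∀ σ : Equiv.Perm (Fin N),
    ∑ i, H (y i) ≤ ∑ i, H ((y i).1, (y (σ i)).2)

/-- A radial convex cone in the product cone. -/
def IsRadialConvexCone (Γ : Set (Cone X₁ × Cone X₂)) : Prop :=
  ∀ (x₁ : X₁) (x₂ : X₂) (a₁ a₂ b₁ b₂ lam mu : ℝ≥0),
    (Cone.mk X₁ x₁ a₁, Cone.mk X₂ x₂ a₂) ∈ Γ → (Cone.mk X₁ x₁ b₁, Cone.mk X₂ x₂ b₂) ∈ Γ →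
      (Cone.mk X₁ x₁ (lam * a₁ + mu * b₁), Cone.mk X₂ x₂ (lam * a₂ + mu * b₂)) ∈ Γ

end Product

/-- Convexity (with scalars in `ℝ≥0`) of an `ℝ≥0∞`-valued function on a module. -/
def ConvexENN {E : Type*} [AddCommMonoid E] [SMul ℝ≥0 E] (f : E → ℝ≥0∞) : Prop :=
  ∀ (a b : E) (t : ℝ≥0), t ≤ 1 →
    f (t • a + (1 - t) • b) ≤ (t : ℝ≥0∞) * f a + ((1 - t : ℝ≥0) : ℝ≥0∞) * f b

/-- The lower semicontinuous convex envelope: the largest lsc convex function below `F`. -/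
def lscConvexHull {E : Type*} [TopologicalSpace E] [AddCommMonoid E] [SMul ℝ≥0 E]
    (F : E → ℝ≥0∞) : E → ℝ≥0∞ :=
  fun e => ⨆ (g : E → ℝ≥0∞) (_ : LowerSemicontinuous g ∧ ConvexENN g ∧ g ≤ F), g e

/-- The convex envelope: the largest convex function below `F`. -/
def convexHullFn {E : Type*} [AddCommMonoid E] [SMul ℝ≥0 E] (F : E → ℝ≥0∞) : E → ℝ≥0∞ :=
  fun e => ⨆ (g : E → ℝ≥0∞) (_ : ConvexENN g ∧ g ≤ F), g e

/-- The lower semicontinuous envelope: the largest lsc function below `F`. -/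
def lscHull {E : Type*} [TopologicalSpace E] (F : E → ℝ≥0∞) : E → ℝ≥0∞ :=
  fun e => ⨆ (g : E → ℝ≥0∞) (_ : LowerSemicontinuous g ∧ g ≤ F), g e

end UOT
namespace UOT

variable (X : Type*) [TopologicalSpace X]

/-- The base-point projection with values in `X ⊔ {o}`, sending the vertex to the extra
point `o`. -/
def basePtSum : Cone X → X ⊕ Unit :=
  Quotient.lift (fun p : X × ℝ≥0 => if p.2 = 0 then Sum.inr () else Sum.inl p.1) (by
    rintro p q (rfl | ⟨h1, h2⟩)
    · rfl
    · simp [h1, h2])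

/-- Rebuild a cone point from a base point in `X ⊔ {o}` and a radius. -/
def mkSum [Nonempty X] : X ⊕ Unit → ℝ≥0 → Cone X
  | Sum.inl x, r => Cone.mk X x r
  | Sum.inr _, _ => Cone.vertex X

variable {X}


-- ===================== auxiliary lemmas =====================
set_option linter.unusedSectionVars false
section Aux

variable {X : Type*} [TopologicalSpace X]

lemma Cone.mk_zero [Nonempty X] (x : X) : Cone.mk X x 0 = Cone.vertex X :=
  Quotient.sound (Or.inr ⟨rfl, rfl⟩)

@[simp] lemma Cone.radius_mk (x : X) (r : ℝ≥0) : Cone.radius X (Cone.mk X x r) = r := rfl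

lemma Cone.basePt_mk [Nonempty X] (x : X) {r : ℝ≥0} (hr : r ≠ 0) :
    Cone.basePt X (Cone.mk X x r) = x := by
  show (if r = 0 then Classical.arbitrary X else x) = x
  simp [hr]

lemma Cone.radius_vertex [Nonempty X] : Cone.radius X (Cone.vertex X) = 0 := rfl

lemma Cone.basePt_of_radius_eq_zero [Nonempty X] {c : Cone X} (h : Cone.radius X c = 0) :
    Cone.basePt X c = Classical.arbitrary X := by
  induction c using Quotient.ind with
  | _ p =>
    obtain ⟨x, r⟩ := p
    have hr : r = 0 := h
    show (if r = 0 then Classical.arbitrary X else x) = Classical.arbitrary X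
    simp [hr]

lemma Cone.mk_basePt_radius [Nonempty X] (c : Cone X) :
    Cone.mk X (Cone.basePt X c) (Cone.radius X c) = c := by
  induction c using Quotient.ind with
  | _ p =>
    obtain ⟨x, r⟩ := p
    show Cone.mk X (Cone.basePt X (Cone.mk X x r)) (Cone.radius X (Cone.mk X x r)) = Cone.mk X x r
    by_cases hr : r = 0
    · subst hr
      rw [Cone.basePt_of_radius_eq_zero (by rfl), Cone.radius_mk]
      exact Quotient.sound (Or.inr ⟨rfl, rfl⟩)
    · rw [Cone.basePt_mk x hr, Cone.radius_mk]

lemma continuous_coneMk : Continuous fun p : X × ℝ≥0 => Cone.mk X p.1 p.2 :=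
  continuous_def.mpr fun _ hU => hU.1

lemma continuous_coneRadius : Continuous (Cone.radius X) := by
  rw [continuous_def]
  intro B hB
  constructor
  · exact hB.preimage continuous_snd
  · intro x h0
    have h0' : (0 : ℝ≥0) ∈ B := h0
    obtain ⟨ε, hε, hsub⟩ := nhds_bot_basis.mem_iff.mp (hB.mem_nhds h0')
    exact ⟨ε, hε, fun y r hr => hsub hr⟩

/-- The set of cone points with nonzero radius and base point in an open set is open. -/
lemma isOpen_posBase {u : Set X} (hu : IsOpen u) [Nonempty X] :
    IsOpen {c : Cone X | Cone.radius X c ≠ 0 ∧ Cone.basePt X c ∈ u} := by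
  constructor
  · have : (fun p : X × ℝ≥0 => Cone.mk X p.1 p.2) ⁻¹'
        {c : Cone X | Cone.radius X c ≠ 0 ∧ Cone.basePt X c ∈ u} = u ×ˢ {(0 : ℝ≥0)}ᶜ := by
      ext ⟨x, r⟩
      by_cases hr : r = 0 <;> simp [Set.mem_setOf_eq, hr, Cone.basePt_mk x, and_comm]
    rw [this]
    exact hu.prod isOpen_compl_singleton
  · intro x hx
    exact absurd (rfl : Cone.radius X (Cone.mk X x 0) = 0) hx.1

lemma measurable_coneRadius [MeasurableSpace X] : Measurable (Cone.radius X) :=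
  continuous_coneRadius.measurable

lemma measurable_coneMk [MeasurableSpace X] [BorelSpace X] :
    Measurable fun p : X × ℝ≥0 => Cone.mk X p.1 p.2 :=
  continuous_coneMk.measurable

lemma measurable_conebasePt [MeasurableSpace X] [BorelSpace X] [Nonempty X] :
    Measurable (Cone.basePt X) := by
  have key : ∀ v : Set X, MeasurableSet v →
      MeasurableSet {c : Cone X | Cone.radius X c ≠ 0 ∧ Cone.basePt X c ∈ v} := by
    intro v hv
    refine MeasurableSet.induction_on_open (C := fun s _ => MeasurableSet {c : Cone X | Cone.radius X c ≠ 0 ∧ Cone.basePt X c ∈ s}) (fun U hU => (isOpen_posBase hU).measurableSet) ?_ ?_ v hv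
    · intro t ht iht
      have : {c : Cone X | Cone.radius X c ≠ 0 ∧ Cone.basePt X c ∈ tᶜ} =
          {c : Cone X | Cone.radius X c ≠ 0} \ {c | Cone.radius X c ≠ 0 ∧ Cone.basePt X c ∈ t} := by
        ext c; by_cases h : Cone.radius X c = 0 <;> simp [h]
      rw [this]
      exact ((measurable_coneRadius (measurableSet_singleton 0)).compl).diff iht
    · intro f _ hf ihf
      have : {c : Cone X | Cone.radius X c ≠ 0 ∧ Cone.basePt X c ∈ ⋃ i, f i} =
          ⋃ i, {c | Cone.radius X c ≠ 0 ∧ Cone.basePt X c ∈ f i} := by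
        ext c; simp only [Set.mem_setOf_eq, Set.mem_iUnion]; tauto
      rw [this]
      exact MeasurableSet.iUnion ihf
  intro v hv
  by_cases hm : Classical.arbitrary X ∈ v
  · have : Cone.basePt X ⁻¹' v = {c : Cone X | Cone.radius X c ≠ 0 ∧ Cone.basePt X c ∈ v} ∪
        {c : Cone X | Cone.radius X c = 0} := by
      ext c
      by_cases h : Cone.radius X c = 0
      · rw [Set.mem_preimage, Cone.basePt_of_radius_eq_zero h]
        simp [h, hm]
      · simp [h]
    rw [this]
    exact (key v hv).union (measurable_coneRadius (measurableSet_singleton 0))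
  · have : Cone.basePt X ⁻¹' v = {c : Cone X | Cone.radius X c ≠ 0 ∧ Cone.basePt X c ∈ v} := by
      ext c
      by_cases h : Cone.radius X c = 0
      · rw [Set.mem_preimage, Cone.basePt_of_radius_eq_zero h]
        simp [h, hm]
      · simp [h]
    rw [this]
    exact key v hv

end Aux


section Aux2
set_option linter.unusedSectionVars false

variable {X : Type*} [TopologicalSpace X]

/-- Vertex strip: an open set containing the vertex contains all points of small radius. -/
lemma exists_strip [Nonempty X] {u : Set (Cone X)} (hu : IsOpen u)
    (hv : Cone.vertex X ∈ u) :
    ∃ ε : ℝ≥0, 0 < ε ∧ ∀ (y : X) (r : ℝ≥0), r < ε → Cone.mk X y r ∈ u :=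
  hu.2 (Classical.arbitrary X) hv

/-- Core neighborhood lemma for one side of the rescaling map. -/
lemma side_nbhd [Nonempty X] {u : Set (Cone X)} (hu : IsOpen u)
    {c : Cone X} (hc : Cone.radius X c ≠ 0) {ρ : ℝ≥0}
    (hρ : Cone.mk X (Cone.basePt X c) ρ ∈ u) :
    ∃ (B : Set ℝ≥0) (V : Set (Cone X)), IsOpen B ∧ IsOpen V ∧ ρ ∈ B ∧ c ∈ V ∧
      ∀ (ρ' : ℝ≥0) (c' : Cone X), ρ' ∈ B → c' ∈ V → Cone.radius X c' ≠ 0 →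
        Cone.mk X (Cone.basePt X c') ρ' ∈ u := by
  by_cases h0 : ρ = 0
  · subst h0
    rw [Cone.mk_zero] at hρ
    obtain ⟨ε, hε, hstrip⟩ := exists_strip hu hρ
    exact ⟨Set.Iio ε, Set.univ, isOpen_Iio, isOpen_univ, hε, Set.mem_univ _,
      fun ρ' c' hB _ _ => hstrip _ _ hB⟩
  · have hpre : IsOpen ((fun q : X × ℝ≥0 => Cone.mk X q.1 q.2) ⁻¹' u) := hu.1
    have hmem : (Cone.basePt X c, ρ) ∈ (fun q : X × ℝ≥0 => Cone.mk X q.1 q.2) ⁻¹' u := hρ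
    obtain ⟨v, B, hv, hB, hxv, hρB, hsub⟩ := isOpen_prod_iff.mp hpre _ _ hmem
    refine ⟨B, {c' : Cone X | Cone.radius X c' ≠ 0 ∧ Cone.basePt X c' ∈ v}, hB,
      isOpen_posBase hv, hρB, ⟨hc, hxv⟩, ?_⟩
    intro ρ' c' hB' hV' _
    exact hsub (Set.mk_mem_prod hV'.2 hB')

end Aux2

section Aux3
set_option linter.unusedSectionVars false

variable {X₁ X₂ : Type*} [TopologicalSpace X₁] [TopologicalSpace X₂]
  [Nonempty X₁] [Nonempty X₂]

/-- The rescaling map: change the radii of a pair of cone points to prescribed values. -/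
def rescale (p : (ℝ≥0 × ℝ≥0) × (Cone X₁ × Cone X₂)) : Cone X₁ × Cone X₂ :=
  (Cone.mk X₁ (Cone.basePt X₁ p.2.1) p.1.1, Cone.mk X₂ (Cone.basePt X₂ p.2.2) p.1.2)

lemma isOpen_rescale_core {U : Set (Cone X₁ × Cone X₂)} (hU : IsOpen U) :
    IsOpen {p : (ℝ≥0 × ℝ≥0) × (Cone X₁ × Cone X₂) |
      Cone.radius X₁ p.2.1 ≠ 0 ∧ Cone.radius X₂ p.2.2 ≠ 0 ∧ rescale p ∈ U} := by
  rw [isOpen_iff_forall_mem_open]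
  rintro ⟨⟨ρ₁, ρ₂⟩, ⟨c₁, c₂⟩⟩ ⟨h1, h2, hres⟩
  obtain ⟨u₁, u₂, hu₁, hu₂, hm₁, hm₂, huu⟩ := isOpen_prod_iff.mp hU _ _ hres
  obtain ⟨B₁, V₁, hB₁, hV₁, hρ₁, hc₁, hP₁⟩ := side_nbhd hu₁ h1 hm₁
  obtain ⟨B₂, V₂, hB₂, hV₂, hρ₂, hc₂, hP₂⟩ := side_nbhd hu₂ h2 hm₂
  refine ⟨(B₁ ×ˢ B₂) ×ˢ ((V₁ ∩ {c | Cone.radius X₁ c ≠ 0}) ×ˢ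
      (V₂ ∩ {c | Cone.radius X₂ c ≠ 0})), ?_, ?_, ?_⟩
  · rintro ⟨⟨ρ₁', ρ₂'⟩, ⟨c₁', c₂'⟩⟩ ⟨⟨hB₁', hB₂'⟩, ⟨hV₁', hr₁'⟩, ⟨hV₂', hr₂'⟩⟩
    exact ⟨hr₁', hr₂', huu (Set.mk_mem_prod (hP₁ _ _ hB₁' hV₁' hr₁') (hP₂ _ _ hB₂' hV₂' hr₂'))⟩
  · have hrad₁ : IsOpen {c : Cone X₁ | Cone.radius X₁ c ≠ 0} :=
      isOpen_compl_singleton.preimage continuous_coneRadius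
    have hrad₂ : IsOpen {c : Cone X₂ | Cone.radius X₂ c ≠ 0} :=
      isOpen_compl_singleton.preimage continuous_coneRadius
    exact (hB₁.prod hB₂).prod ((hV₁.inter hrad₁).prod (hV₂.inter hrad₂))
  · exact Set.mk_mem_prod (Set.mk_mem_prod hρ₁ hρ₂)
      (Set.mk_mem_prod ⟨hc₁, h1⟩ ⟨hc₂, h2⟩)

lemma measurable_of_isOpen_preimage {β : Type*} [MeasurableSpace β]
    {f : β → Cone X₁ × Cone X₂} (h : ∀ U : Set (Cone X₁ × Cone X₂), IsOpen U →
      MeasurableSet (f ⁻¹' U)) : Measurable f := by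
  intro s hs
  have hs' : MeasurableSet[MeasurableSpace.generateFrom {U : Set (Cone X₁ × Cone X₂) | IsOpen U}] s := hs
  clear hs
  induction hs' with
  | basic U hU => exact h U hU
  | empty => simp
  | compl t _ iht => exact iht.compl
  | iUnion g _ ihg =>
    rw [Set.preimage_iUnion]
    exact MeasurableSet.iUnion ihg

variable [MeasurableSpace X₁] [BorelSpace X₁] [MeasurableSpace X₂] [BorelSpace X₂]

lemma measurable_rescale : Measurable (rescale (X₁ := X₁) (X₂ := X₂)) := by
  apply measurable_of_isOpen_preimage
  intro U hU
  classical
  -- regularizing maps replacing a zero-radius coordinate by a fixed positive-radius point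
  set a₁ : Cone X₁ := Cone.mk X₁ (Classical.arbitrary X₁) 1 with ha₁
  set a₂ : Cone X₂ := Cone.mk X₂ (Classical.arbitrary X₂) 1 with ha₂
  set core : Set ((ℝ≥0 × ℝ≥0) × (Cone X₁ × Cone X₂)) :=
    {p | Cone.radius X₁ p.2.1 ≠ 0 ∧ Cone.radius X₂ p.2.2 ≠ 0 ∧ rescale p ∈ U} with hcore
  have hcore_open : IsOpen core := isOpen_rescale_core hU
  have hΛ₁ : Continuous fun p : (ℝ≥0 × ℝ≥0) × (Cone X₁ × Cone X₂) =>
      ((p.1.1, p.1.2), (a₁, p.2.2)) := by fun_prop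
  have hΛ₂ : Continuous fun p : (ℝ≥0 × ℝ≥0) × (Cone X₁ × Cone X₂) =>
      ((p.1.1, p.1.2), (p.2.1, a₂)) := by fun_prop
  have hΛ₁₂ : Continuous fun p : (ℝ≥0 × ℝ≥0) × (Cone X₁ × Cone X₂) =>
      ((p.1.1, p.1.2), (a₁, a₂)) := by fun_prop
  have hz₁ : MeasurableSet {p : (ℝ≥0 × ℝ≥0) × (Cone X₁ × Cone X₂) |
      Cone.radius X₁ p.2.1 = 0} := by
    have : Measurable fun p : (ℝ≥0 × ℝ≥0) × (Cone X₁ × Cone X₂) => Cone.radius X₁ p.2.1 := by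
      exact (continuous_coneRadius.comp (continuous_fst.comp continuous_snd)).measurable
    exact this (measurableSet_singleton 0)
  have hz₂ : MeasurableSet {p : (ℝ≥0 × ℝ≥0) × (Cone X₁ × Cone X₂) |
      Cone.radius X₂ p.2.2 = 0} := by
    have : Measurable fun p : (ℝ≥0 × ℝ≥0) × (Cone X₁ × Cone X₂) => Cone.radius X₂ p.2.2 := by
      exact (continuous_coneRadius.comp (continuous_snd.comp continuous_snd)).measurable
    exact this (measurableSet_singleton 0)
  have hbase_a₁ : Cone.basePt X₁ a₁ = Classical.arbitrary X₁ := Cone.basePt_mk _ one_ne_zero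
  have hbase_a₂ : Cone.basePt X₂ a₂ = Classical.arbitrary X₂ := Cone.basePt_mk _ one_ne_zero
  have hrad_a₁ : Cone.radius X₁ a₁ = 1 := rfl
  have hrad_a₂ : Cone.radius X₂ a₂ = 1 := rfl
  have key : rescale ⁻¹' U =
      core ∪
      ({p | Cone.radius X₁ p.2.1 = 0} ∩ (fun p : (ℝ≥0 × ℝ≥0) × (Cone X₁ × Cone X₂) =>
        ((p.1.1, p.1.2), (a₁, p.2.2))) ⁻¹' core) ∪
      ({p | Cone.radius X₂ p.2.2 = 0} ∩ (fun p : (ℝ≥0 × ℝ≥0) × (Cone X₁ × Cone X₂) =>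
        ((p.1.1, p.1.2), (p.2.1, a₂))) ⁻¹' core) ∪
      ({p | Cone.radius X₁ p.2.1 = 0} ∩ {p | Cone.radius X₂ p.2.2 = 0} ∩
        (fun p : (ℝ≥0 × ℝ≥0) × (Cone X₁ × Cone X₂) =>
        ((p.1.1, p.1.2), (a₁, a₂))) ⁻¹' core) := by
    ext ⟨⟨ρ₁, ρ₂⟩, ⟨c₁, c₂⟩⟩
    simp only [Set.mem_union, Set.mem_inter_iff, Set.mem_preimage, Set.mem_setOf_eq, hcore,
      rescale]
    by_cases e1 : Cone.radius X₁ c₁ = 0 <;> by_cases e2 : Cone.radius X₂ c₂ = 0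
    · rw [Cone.basePt_of_radius_eq_zero e1, Cone.basePt_of_radius_eq_zero e2,
        ← hbase_a₁, ← hbase_a₂]
      simp [e1, e2, hrad_a₁, hrad_a₂]
    · rw [Cone.basePt_of_radius_eq_zero e1, ← hbase_a₁]
      simp [e1, e2, hrad_a₁]
    · rw [Cone.basePt_of_radius_eq_zero e2, ← hbase_a₂]
      simp [e1, e2, hrad_a₂]
    · simp [e1, e2]
  rw [key]
  exact ((hcore_open.measurableSet.union
      (hz₁.inter (hΛ₁.measurable hcore_open.measurableSet))).union
      (hz₂.inter (hΛ₂.measurable hcore_open.measurableSet))).union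
      ((hz₁.inter hz₂).inter (hΛ₁₂.measurable hcore_open.measurableSet))

/-- Pairing a measurable map into one cone with a constant in the other is measurable. -/
lemma measurable_pair_const_right {β : Type*} [MeasurableSpace β]
    {f : β → Cone X₁} (hf : Measurable f) (c : Cone X₂) :
    Measurable fun b => ((f b, c) : Cone X₁ × Cone X₂) := by
  have hcont : Continuous fun y : Cone X₁ => ((y, c) : Cone X₁ × Cone X₂) := by fun_prop
  exact hcont.measurable.comp hf

lemma measurable_pair_const_left {β : Type*} [MeasurableSpace β]
    {f : β → Cone X₂} (hf : Measurable f) (c : Cone X₁) :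
    Measurable fun b => ((c, f b) : Cone X₁ × Cone X₂) := by
  have hcont : Continuous fun y : Cone X₂ => ((c, y) : Cone X₁ × Cone X₂) := by fun_prop
  exact hcont.measurable.comp hf

end Aux3


section Aux4
set_option linter.unusedSectionVars false

variable {X : Type*} [TopologicalSpace X]

/-- Effective radius: kills the radius over the added point `o`. -/
def effSum {β : Type*} : β ⊕ Unit → ℝ≥0 → ℝ≥0
  | Sum.inl _, r => r
  | Sum.inr _, _ => 0

@[simp] lemma effSum_inl {β : Type*} (x : β) (r : ℝ≥0) : effSum (Sum.inl x) r = r := rfl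
@[simp] lemma effSum_inr {β : Type*} (u : Unit) (r : ℝ≥0) : effSum (Sum.inr u : β ⊕ Unit) r = 0 := rfl

lemma measurable_effSum {β : Type*} [MeasurableSpace β] :
    Measurable fun p : (β ⊕ Unit) × ℝ≥0 => effSum p.1 p.2 := by
  classical
  have : (fun p : (β ⊕ Unit) × ℝ≥0 => effSum p.1 p.2) =
      fun p => if p.1 ∈ Set.range (Sum.inl : β → β ⊕ Unit) then p.2 else 0 := by
    ext ⟨s, r⟩
    cases s with
    | inl v => rw [effSum_inl, if_pos ⟨v, rfl⟩]
    | inr u =>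
      rw [effSum_inr, if_neg]
      rintro ⟨y, hy⟩
      cases hy
  rw [this]
  exact Measurable.ite (measurable_fst measurableSet_range_inl) measurable_snd measurable_const

@[simp] lemma mkSum_inl [Nonempty X] (x : X) (r : ℝ≥0) :
    mkSum X (Sum.inl x) r = Cone.mk X x r := rfl

lemma continuous_effSum {β : Type*} (s : β ⊕ Unit) : Continuous fun r : ℝ≥0 => effSum s r := by
  cases s
  · exact continuous_id
  · exact continuous_const

/-- Base point extraction on `X ⊕ Unit`. -/
def xl (X : Type*) [Nonempty X] : X ⊕ Unit → X := Sum.elim id fun _ => Classical.arbitrary X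

@[simp] lemma xl_inl [Nonempty X] (x : X) : xl X (Sum.inl x) = x := rfl
@[simp] lemma xl_inr [Nonempty X] (u : Unit) : xl X (Sum.inr u) = Classical.arbitrary X := rfl

lemma measurable_xl [Nonempty X] [MeasurableSpace X] : Measurable (xl X) :=
  Measurable.sumElim measurable_id measurable_const

/-- The canonical form of `mkSum`. -/
lemma mkSum_eq_mk [Nonempty X] (s : X ⊕ Unit) (r : ℝ≥0) :
    mkSum X s r = Cone.mk X (xl X s) (effSum s r) := by
  cases s <;> rfl

lemma radius_mkSum [Nonempty X] (s : X ⊕ Unit) (r : ℝ≥0) :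
    Cone.radius X (mkSum X s r) = effSum s r := by
  rw [mkSum_eq_mk, Cone.radius_mk]

lemma basePtSum_mk (x : X) (r : ℝ≥0) :
    basePtSum X (Cone.mk X x r) = if r = 0 then Sum.inr () else Sum.inl x := rfl

lemma basePtSum_eq [Nonempty X] (c : Cone X) :
    basePtSum X c = if Cone.radius X c = 0 then Sum.inr () else Sum.inl (Cone.basePt X c) := by
  induction c using Quotient.ind with
  | _ p =>
    obtain ⟨x, r⟩ := p
    show basePtSum X (Cone.mk X x r) = if Cone.radius X (Cone.mk X x r) = 0 then Sum.inr ()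
      else Sum.inl (Cone.basePt X (Cone.mk X x r))
    rw [basePtSum_mk, Cone.radius_mk]
    by_cases hr : r = 0
    · simp [hr]
    · rw [if_neg hr, if_neg hr, Cone.basePt_mk x hr]

lemma basePtSum_mkSum_mem [Nonempty X] (s : X ⊕ Unit) (r : ℝ≥0) :
    basePtSum X (mkSum X s r) ∈ Set.range (Sum.inl : X → X ⊕ Unit) ↔
      (s ∈ Set.range (Sum.inl : X → X ⊕ Unit) ∧ r ≠ 0) := by
  cases s with
  | inl x =>
    show basePtSum X (Cone.mk X x r) ∈ _ ↔ _
    rw [basePtSum_mk]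
    by_cases hr : r = 0
    · simp [hr]
    · simp [hr]
  | inr u =>
    show basePtSum X (Cone.vertex X) ∈ _ ↔ _
    have : basePtSum X (Cone.vertex X) = Sum.inr () := by
      show basePtSum X (Cone.mk X (Classical.arbitrary X) 0) = Sum.inr ()
      rw [basePtSum_mk, if_pos rfl]
    rw [this]
    simp

lemma basePtSum_mkSum_eq [Nonempty X] (s : X ⊕ Unit) (r : ℝ≥0) (hr : r ≠ 0)
    (hs : s ∈ Set.range (Sum.inl : X → X ⊕ Unit)) : basePtSum X (mkSum X s r) = s := by
  obtain ⟨x, rfl⟩ := hs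
  show basePtSum X (Cone.mk X x r) = _
  rw [basePtSum_mk, if_neg hr]

lemma measurable_basePtSum [Nonempty X] [MeasurableSpace X] [BorelSpace X] :
    Measurable (basePtSum X) := by
  have : basePtSum X = fun c =>
      if Cone.radius X c = 0 then Sum.inr () else Sum.inl (Cone.basePt X c) :=
    funext basePtSum_eq
  rw [this]
  exact Measurable.ite (measurable_coneRadius (measurableSet_singleton 0)) measurable_const
    (measurable_inl.comp measurable_conebasePt)

end Aux4

section Jensen
set_option linter.unusedSectionVars false

variable {X₁ X₂ : Type*} [TopologicalSpace X₁] [TopologicalSpace X₂] [Nonempty X₁] [Nonempty X₂]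

lemma jensen_fiber (H : Cone X₁ × Cone X₂ → ℝ≥0∞) (hlsc : LowerSemicontinuous H)
    (hconv : RadiallyConvex H) (x₁ : X₁) (x₂ : X₂)
    (μ : Measure (ℝ≥0 × ℝ≥0)) [IsProbabilityMeasure μ]
    (h1 : ∫⁻ r, (r.1 : ℝ≥0∞) ∂μ ≠ ⊤) (h2 : ∫⁻ r, (r.2 : ℝ≥0∞) ∂μ ≠ ⊤) :
    H (Cone.mk X₁ x₁ (∫⁻ r, (r.1 : ℝ≥0∞) ∂μ).toNNReal,
       Cone.mk X₂ x₂ (∫⁻ r, (r.2 : ℝ≥0∞) ∂μ).toNNReal) ≤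
      ∫⁻ r, H (Cone.mk X₁ x₁ r.1, Cone.mk X₂ x₂ r.2) ∂μ := by
  classical
  set h : ℝ≥0 × ℝ≥0 → ℝ≥0∞ := fun s => H (Cone.mk X₁ x₁ s.1, Cone.mk X₂ x₂ s.2) with hh
  have hcont : Continuous fun s : ℝ≥0 × ℝ≥0 => ((Cone.mk X₁ x₁ s.1, Cone.mk X₂ x₂ s.2) :
      Cone X₁ × Cone X₂) := by
    refine Continuous.prodMk ?_ ?_
    · exact continuous_coneMk.comp (continuous_const.prodMk continuous_fst)
    · exact continuous_coneMk.comp (continuous_const.prodMk continuous_snd)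
  have hlsch : LowerSemicontinuous h := hlsc.comp hcont
  have hmeash : Measurable h := hlsch.measurable
  by_cases hI : ∫⁻ s, h s ∂μ = ⊤
  · exact hI ▸ le_top
  have hfin : ∀ᵐ s ∂μ, h s ≠ ⊤ := (ae_lt_top hmeash hI).mono fun s hs => hs.ne
  -- the epigraph-type closed convex set
  set C : Set (ℝ × ℝ × ℝ) := {p | 0 ≤ p.1 ∧ 0 ≤ p.2.1 ∧ 0 ≤ p.2.2 ∧
    h (p.1.toNNReal, p.2.1.toNNReal) ≤ ENNReal.ofReal p.2.2} with hC
  have hφ : LowerSemicontinuous fun p : ℝ × ℝ × ℝ => h (p.1.toNNReal, p.2.1.toNNReal) :=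
    hlsch.comp ((continuous_real_toNNReal.comp continuous_fst).prodMk
      (continuous_real_toNNReal.comp (continuous_fst.comp continuous_snd)))
  have hCclosed : IsClosed C := by
    have h1c : IsClosed {p : ℝ × ℝ × ℝ | 0 ≤ p.1} := isClosed_le continuous_const continuous_fst
    have h2c : IsClosed {p : ℝ × ℝ × ℝ | 0 ≤ p.2.1} :=
      isClosed_le continuous_const (continuous_fst.comp continuous_snd)
    have h3c : IsClosed {p : ℝ × ℝ × ℝ | 0 ≤ p.2.2} :=
      isClosed_le continuous_const (continuous_snd.comp continuous_snd)
    have h4c : IsClosed {p : ℝ × ℝ × ℝ |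
        h (p.1.toNNReal, p.2.1.toNNReal) ≤ ENNReal.ofReal p.2.2} := by
      rw [← isOpen_compl_iff, isOpen_iff_mem_nhds]
      intro p hp
      rw [Set.mem_compl_iff, Set.mem_setOf_eq, not_le] at hp
      obtain ⟨c, hc1, hc2⟩ := exists_between hp
      have hcψ : Continuous fun p' : ℝ × ℝ × ℝ => ENNReal.ofReal p'.2.2 :=
        ENNReal.continuous_ofReal.comp (continuous_snd.comp continuous_snd)
      have hev1 : ∀ᶠ p' in nhds p, c < h (p'.1.toNNReal, p'.2.1.toNNReal) := hφ p c hc2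
      have hev2 : ∀ᶠ p' in nhds p, ENNReal.ofReal p'.2.2 < c :=
        (hcψ.tendsto p).eventually (isOpen_Iio.eventually_mem hc1)
      exact (hev1.and hev2).mono fun p' ⟨ha, hb⟩ => not_le.mpr (hb.trans ha)
    have : C = {p : ℝ × ℝ × ℝ | 0 ≤ p.1} ∩ ({p | 0 ≤ p.2.1} ∩ ({p | 0 ≤ p.2.2} ∩
        {p | h (p.1.toNNReal, p.2.1.toNNReal) ≤ ENNReal.ofReal p.2.2})) := by
      ext p; simp [hC, and_assoc]
    rw [this]
    exact h1c.inter (h2c.inter (h3c.inter h4c))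
  have hCconv : Convex ℝ C := by
    rintro p ⟨hp1, hp2, hp3, hp4⟩ q ⟨hq1, hq2, hq3, hq4⟩ a b ha hb hab
    have ha1 : a ≤ 1 := by linarith
    simp only [hC, Set.mem_setOf_eq, Prod.fst_add, Prod.snd_add, Prod.smul_fst, Prod.smul_snd,
      smul_eq_mul]
    refine ⟨add_nonneg (mul_nonneg ha hp1) (mul_nonneg hb hq1),
      add_nonneg (mul_nonneg ha hp2) (mul_nonneg hb hq2),
      add_nonneg (mul_nonneg ha hp3) (mul_nonneg hb hq3), ?_⟩
    set t : ℝ≥0 := ⟨a, ha⟩ with hta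
    have htle : t ≤ 1 := by
      rw [← NNReal.coe_le_coe]; exact ha1
    have h1t : (1 - t : ℝ≥0) = (⟨b, hb⟩ : ℝ≥0) := by
      apply NNReal.eq; rw [NNReal.coe_sub htle]
      show (1 : ℝ) - a = b
      linarith
    have hat : Real.toNNReal a = t := Real.toNNReal_coe (r := t)
    have hbt : Real.toNNReal b = 1 - t := by rw [h1t]; exact Real.toNNReal_coe (r := ⟨b, hb⟩)
    have e1 : (a * p.1 + b * q.1).toNNReal = t * p.1.toNNReal + (1 - t) * q.1.toNNReal := by
      rw [Real.toNNReal_add (mul_nonneg ha hp1) (mul_nonneg hb hq1),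
        Real.toNNReal_mul ha, Real.toNNReal_mul hb, hat, hbt]
    have e2 : (a * p.2.1 + b * q.2.1).toNNReal =
        t * p.2.1.toNNReal + (1 - t) * q.2.1.toNNReal := by
      rw [Real.toNNReal_add (mul_nonneg ha hp2) (mul_nonneg hb hq2),
        Real.toNNReal_mul ha, Real.toNNReal_mul hb, hat, hbt]
    have hofa : (t : ℝ≥0∞) = ENNReal.ofReal a := (ENNReal.ofReal_coe_nnreal (p := t)).symm
    have hofb : ((1 - t : ℝ≥0) : ℝ≥0∞) = ENNReal.ofReal b := by
      rw [h1t]; exact (ENNReal.ofReal_coe_nnreal (p := ⟨b, hb⟩)).symm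
    calc h ((a * p.1 + b * q.1).toNNReal, (a * p.2.1 + b * q.2.1).toNNReal)
        = h (t * p.1.toNNReal + (1 - t) * q.1.toNNReal,
            t * p.2.1.toNNReal + (1 - t) * q.2.1.toNNReal) := by rw [e1, e2]
      _ ≤ (t : ℝ≥0∞) * h (p.1.toNNReal, p.2.1.toNNReal) +
            ((1 - t : ℝ≥0) : ℝ≥0∞) * h (q.1.toNNReal, q.2.1.toNNReal) :=
          hconv x₁ x₂ _ _ _ _ t htle
      _ ≤ (t : ℝ≥0∞) * ENNReal.ofReal p.2.2 + ((1 - t : ℝ≥0) : ℝ≥0∞) * ENNReal.ofReal q.2.2 :=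
          add_le_add (mul_le_mul_right hp4 _) (mul_le_mul_right hq4 _)
      _ = ENNReal.ofReal (a * p.2.2 + b * q.2.2) := by
          rw [ENNReal.ofReal_add (mul_nonneg ha hp3) (mul_nonneg hb hq3),
            ENNReal.ofReal_mul ha, ENNReal.ofReal_mul hb, hofa, hofb]
  set f : ℝ≥0 × ℝ≥0 → ℝ × ℝ × ℝ := fun s => ((s.1 : ℝ), (s.2 : ℝ), (h s).toReal) with hf
  have hmem : ∀ᵐ s ∂μ, f s ∈ C := by
    filter_upwards [hfin] with s hs
    exact ⟨s.1.coe_nonneg, s.2.coe_nonneg, ENNReal.toReal_nonneg,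
      by rw [Real.toNNReal_coe, Real.toNNReal_coe, ENNReal.ofReal_toReal hs]⟩
  have hi1 : Integrable (fun s : ℝ≥0 × ℝ≥0 => (s.1 : ℝ)) μ := by
    have := integrable_toReal_of_lintegral_ne_top
      (f := fun s : ℝ≥0 × ℝ≥0 => (s.1 : ℝ≥0∞)) (μ := μ)
      ((measurable_coe_nnreal_ennreal.comp measurable_fst).aemeasurable) h1
    simpa using this
  have hi2 : Integrable (fun s : ℝ≥0 × ℝ≥0 => (s.2 : ℝ)) μ := by
    have := integrable_toReal_of_lintegral_ne_top
      (f := fun s : ℝ≥0 × ℝ≥0 => (s.2 : ℝ≥0∞)) (μ := μ)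
      ((measurable_coe_nnreal_ennreal.comp measurable_snd).aemeasurable) h2
    simpa using this
  have hi3 : Integrable (fun s : ℝ≥0 × ℝ≥0 => (h s).toReal) μ :=
    integrable_toReal_of_lintegral_ne_top hmeash.aemeasurable hI
  have hint : Integrable f μ := hi1.prodMk (hi2.prodMk hi3)
  have KEY := hCconv.integral_mem hCclosed hmem hint
  have c1 : ∫ s, (s.1 : ℝ) ∂μ = (∫ s, f s ∂μ).1 :=
    (ContinuousLinearMap.fst ℝ ℝ (ℝ × ℝ)).integral_comp_comm hint
  have c2 : ∫ s, (s.2 : ℝ) ∂μ = (∫ s, f s ∂μ).2.1 :=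
    ((ContinuousLinearMap.fst ℝ ℝ ℝ).comp
      (ContinuousLinearMap.snd ℝ ℝ (ℝ × ℝ))).integral_comp_comm hint
  have c3 : ∫ s, (h s).toReal ∂μ = (∫ s, f s ∂μ).2.2 :=
    ((ContinuousLinearMap.snd ℝ ℝ ℝ).comp
      (ContinuousLinearMap.snd ℝ ℝ (ℝ × ℝ))).integral_comp_comm hint
  obtain ⟨-, -, -, hKEY⟩ := KEY
  rw [← c1, ← c2, ← c3] at hKEY
  have e1 : ∫ s, (s.1 : ℝ) ∂μ = (∫⁻ s, (s.1 : ℝ≥0∞) ∂μ).toReal := by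
    rw [← integral_toReal (μ := μ) (f := fun s : ℝ≥0 × ℝ≥0 => (s.1 : ℝ≥0∞))
      ((measurable_coe_nnreal_ennreal.comp measurable_fst).aemeasurable)
      (Filter.Eventually.of_forall fun s => ENNReal.coe_lt_top)]
    simp
  have e2 : ∫ s, (s.2 : ℝ) ∂μ = (∫⁻ s, (s.2 : ℝ≥0∞) ∂μ).toReal := by
    rw [← integral_toReal (μ := μ) (f := fun s : ℝ≥0 × ℝ≥0 => (s.2 : ℝ≥0∞))
      ((measurable_coe_nnreal_ennreal.comp measurable_snd).aemeasurable)
      (Filter.Eventually.of_forall fun s => ENNReal.coe_lt_top)]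
    simp
  have e3 : ∫ s, (h s).toReal ∂μ = (∫⁻ s, h s ∂μ).toReal :=
    integral_toReal hmeash.aemeasurable (ae_lt_top hmeash hI)
  rw [e1, e2, e3] at hKEY
  have tnn : ∀ x : ℝ≥0∞, x.toReal.toNNReal = x.toNNReal := fun x => Real.toNNReal_coe
  rw [tnn, tnn, ENNReal.ofReal_toReal hI] at hKEY
  exact hKEY

end Jensen


set_option maxHeartbeats 2000000 in
/-- Barycentric projection decreases the cost: let `α ∈ H¹(μ₁,μ₂)` with
disintegration `α = ∫ α_{x₁,x₂} dγ(x₁,x₂)` over the base-point projection `γ`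
(`α_{x₁,x₂}` probability measures on `ℝ₊²`, given by a Markov kernel `κ`), and let `α_b` be
the pushforward of `γ` under `(x₁,x₂) ↦ ([x₁,ρ₁(x₁,x₂)],[x₂,ρ₂(x₁,x₂)])` where
`ρᵢ = ∫ rᵢ dα_{x₁,x₂}` are the barycenters.  Then `α_b ∈ H¹(μ₁,μ₂)` and, if `H` is proper,
radially `1`-homogeneous, lsc and radially convex, `∫ H dα_b ≤ ∫ H dα`. -/
theorem barycentric_projection
    {X₁ X₂ : Type*} [TopologicalSpace X₁] [TopologicalSpace X₂]
    [T2Space X₁] [T2Space X₂] [CompletelyRegularSpace X₁] [CompletelyRegularSpace X₂]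
    [MeasurableSpace X₁] [BorelSpace X₁] [MeasurableSpace X₂] [BorelSpace X₂]
    [Nonempty X₁] [Nonempty X₂]
    (H : Cone X₁ × Cone X₂ → ℝ≥0∞) (hproper : ProperCost H)
    (hhom : RadiallyHomogeneous H) (hlsc : LowerSemicontinuous H)
    (μ₁ : FiniteMeasure X₁) (μ₂ : FiniteMeasure X₂)
    (α : Measure (Cone X₁ × Cone X₂))
    (hα : IsHomCoupling 1 α (μ₁ : Measure X₁) (μ₂ : Measure X₂))
    (γ : Measure ((X₁ ⊕ Unit) × (X₂ ⊕ Unit)))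
    (hγ : γ = Measure.map
      (fun y : Cone X₁ × Cone X₂ => (basePtSum X₁ y.1, basePtSum X₂ y.2)) α)
    (κ : ProbabilityTheory.Kernel ((X₁ ⊕ Unit) × (X₂ ⊕ Unit)) (ℝ≥0 × ℝ≥0))
    [ProbabilityTheory.IsMarkovKernel κ]
    (hdis : α = γ.bind fun q =>
      Measure.map (fun r : ℝ≥0 × ℝ≥0 => (mkSum X₁ q.1 r.1, mkSum X₂ q.2 r.2)) (κ q)) :
    IsHomCoupling 1
      (Measure.map (fun q : (X₁ ⊕ Unit) × (X₂ ⊕ Unit) =>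
        (mkSum X₁ q.1 ((∫⁻ r : ℝ≥0 × ℝ≥0, (r.1 : ℝ≥0∞) ∂(κ q)).toNNReal),
         mkSum X₂ q.2 ((∫⁻ r : ℝ≥0 × ℝ≥0, (r.2 : ℝ≥0∞) ∂(κ q)).toNNReal))) γ)
      (μ₁ : Measure X₁) (μ₂ : Measure X₂) ∧
    (RadiallyConvex H →
      (∫⁻ y, H y ∂(Measure.map (fun q : (X₁ ⊕ Unit) × (X₂ ⊕ Unit) =>
        (mkSum X₁ q.1 ((∫⁻ r : ℝ≥0 × ℝ≥0, (r.1 : ℝ≥0∞) ∂(κ q)).toNNReal),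
         mkSum X₂ q.2 ((∫⁻ r : ℝ≥0 × ℝ≥0, (r.2 : ℝ≥0∞) ∂(κ q)).toNNReal))) γ)) ≤
      ∫⁻ y, H y ∂α) := by
  classical
  obtain ⟨hαfin, hαmom, hμ₁, hμ₂⟩ := hα
  haveI := hαfin
  set π : Cone X₁ × Cone X₂ → (X₁ ⊕ Unit) × (X₂ ⊕ Unit) :=
    fun y => (basePtSum X₁ y.1, basePtSum X₂ y.2) with hπdef
  have hπ : Measurable π :=
    (measurable_basePtSum.comp continuous_fst.measurable).prodMk
      (measurable_basePtSum.comp continuous_snd.measurable)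
  set F : (X₁ ⊕ Unit) × (X₂ ⊕ Unit) → Measure (Cone X₁ × Cone X₂) := fun q =>
    Measure.map (fun r : ℝ≥0 × ℝ≥0 => (mkSum X₁ q.1 r.1, mkSum X₂ q.2 r.2)) (κ q) with hFdef
  set T : (X₁ ⊕ Unit) × (X₂ ⊕ Unit) → Cone X₁ × Cone X₂ := fun q =>
    (mkSum X₁ q.1 ((∫⁻ r : ℝ≥0 × ℝ≥0, (r.1 : ℝ≥0∞) ∂(κ q)).toNNReal),
     mkSum X₂ q.2 ((∫⁻ r : ℝ≥0 × ℝ≥0, (r.2 : ℝ≥0∞) ∂(κ q)).toNNReal)) with hTdef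
  -- fiber maps are measurable
  have hPq : ∀ q : (X₁ ⊕ Unit) × (X₂ ⊕ Unit),
      Measurable fun r : ℝ≥0 × ℝ≥0 => ((mkSum X₁ q.1 r.1, mkSum X₂ q.2 r.2) :
        Cone X₁ × Cone X₂) := by
    intro q
    have heq : (fun r : ℝ≥0 × ℝ≥0 => ((mkSum X₁ q.1 r.1, mkSum X₂ q.2 r.2) :
        Cone X₁ × Cone X₂)) = fun r => (Cone.mk X₁ (xl X₁ q.1) (effSum q.1 r.1),
          Cone.mk X₂ (xl X₂ q.2) (effSum q.2 r.2)) := by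
      funext r
      rw [mkSum_eq_mk, mkSum_eq_mk]
    rw [heq]
    have : Continuous fun r : ℝ≥0 × ℝ≥0 => ((Cone.mk X₁ (xl X₁ q.1) (effSum q.1 r.1),
        Cone.mk X₂ (xl X₂ q.2) (effSum q.2 r.2)) : Cone X₁ × Cone X₂) := by
      refine Continuous.prodMk ?_ ?_
      · exact continuous_coneMk.comp
          (continuous_const.prodMk ((continuous_effSum q.1).comp continuous_fst))
      · exact continuous_coneMk.comp
          (continuous_const.prodMk ((continuous_effSum q.2).comp continuous_snd))
    exact this.measurable
  have hFprob : ∀ q, IsProbabilityMeasure (F q) := fun q =>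
    Measure.isProbabilityMeasure_map (hPq q).aemeasurable
  -- degenerate case: the disintegration kernel is not a.e.-measurable, so `α = 0`
  by_cases hF : AEMeasurable F γ
  swap
  · have hα0 : α = 0 := by
      rw [hdis]
      show Measure.join (Measure.map F γ) = 0
      rw [Measure.map_of_not_aemeasurable hF, Measure.join_zero]
    have hγ0 : γ = 0 := by rw [hγ, hα0, Measure.map_zero]
    have hmap0 : Measure.map T γ = 0 := by rw [hγ0, Measure.map_zero]
    have hhm1 : homMarginalFst (1 : ℝ) (0 : Measure (Cone X₁ × Cone X₂)) = 0 := by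
      unfold homMarginalFst
      rw [withDensity_zero_left, Measure.map_zero]
    have hhm2 : homMarginalSnd (1 : ℝ) (0 : Measure (Cone X₁ × Cone X₂)) = 0 := by
      unfold homMarginalSnd
      rw [withDensity_zero_left, Measure.map_zero]
    constructor
    · refine ⟨by rw [hmap0]; infer_instance, ?_, ?_, ?_⟩
      · rw [hmap0, lintegral_zero_measure]
        exact ENNReal.zero_ne_top
      · rw [hmap0, hhm1, ← hμ₁, hα0, hhm1]
      · rw [hmap0, hhm2, ← hμ₂, hα0, hhm2]
    · intro _
      rw [hmap0, lintegral_zero_measure]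
      exact bot_le
  -- main case
  · haveI hγfin : IsFiniteMeasure γ := by
      rw [hγ]
      exact ⟨by rw [Measure.map_apply hπ MeasurableSet.univ]; exact measure_lt_top α _⟩
    -- a measurable, probability-valued version of `F`
    obtain ⟨g₀, hg₀meas, hg₀ae⟩ := hF
    set g : (X₁ ⊕ Unit) × (X₂ ⊕ Unit) → Measure (Cone X₁ × Cone X₂) := fun q =>
      if g₀ q Set.univ = 1 then g₀ q
        else Measure.dirac (Cone.vertex X₁, Cone.vertex X₂) with hgdef
    have hgmeas : Measurable g := by
      refine Measurable.ite ?_ hg₀meas measurable_const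
      exact ((Measure.measurable_coe MeasurableSet.univ).comp hg₀meas)
        (measurableSet_singleton 1)
    have hgae' : ∀ᵐ q ∂γ, F q = g q := by
      filter_upwards [hg₀ae] with q hq
      have h1 : g₀ q Set.univ = 1 := by
        rw [← hq]
        haveI := hFprob q
        exact measure_univ
      rw [hgdef]
      simp only [h1, if_pos]
      exact hq
    have hgprob : ∀ q, IsProbabilityMeasure (g q) := by
      intro q
      rw [hgdef]
      by_cases h1 : g₀ q Set.univ = 1
      · simp only [h1, if_pos]
        exact ⟨h1⟩
      · simp only [h1, if_neg, ite_false]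
        infer_instance
    have hbindg : α = γ.bind g := by
      rw [hdis]
      show Measure.join (Measure.map F γ) = Measure.join (Measure.map g γ)
      rw [Measure.map_congr hgae']
    set Kg : ProbabilityTheory.Kernel ((X₁ ⊕ Unit) × (X₂ ⊕ Unit)) (Cone X₁ × Cone X₂) :=
      ⟨g, hgmeas⟩ with hKg
    haveI : ProbabilityTheory.IsMarkovKernel Kg := ⟨hgprob⟩
    -- barycenter radii
    set R1 : (X₁ ⊕ Unit) × (X₂ ⊕ Unit) → ℝ≥0∞ := fun q =>
      ∫⁻ r : ℝ≥0 × ℝ≥0, ((effSum q.1 r.1 : ℝ≥0) : ℝ≥0∞) ∂(κ q) with hR1def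
    set R2 : (X₁ ⊕ Unit) × (X₂ ⊕ Unit) → ℝ≥0∞ := fun q =>
      ∫⁻ r : ℝ≥0 × ℝ≥0, ((effSum q.2 r.2 : ℝ≥0) : ℝ≥0∞) ∂(κ q) with hR2def
    have hR1meas : Measurable R1 := by
      have hm : Measurable fun p : ((X₁ ⊕ Unit) × (X₂ ⊕ Unit)) × (ℝ≥0 × ℝ≥0) =>
          ((effSum p.1.1 p.2.1 : ℝ≥0) : ℝ≥0∞) :=
        measurable_coe_nnreal_ennreal.comp (measurable_effSum.comp
          ((measurable_fst.comp measurable_fst).prodMk (measurable_fst.comp measurable_snd)))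
      exact Measurable.lintegral_kernel_prod_right' (κ := κ)
        (f := fun p : ((X₁ ⊕ Unit) × (X₂ ⊕ Unit)) × (ℝ≥0 × ℝ≥0) =>
          ((effSum p.1.1 p.2.1 : ℝ≥0) : ℝ≥0∞)) hm
    have hR2meas : Measurable R2 := by
      have hm : Measurable fun p : ((X₁ ⊕ Unit) × (X₂ ⊕ Unit)) × (ℝ≥0 × ℝ≥0) =>
          ((effSum p.1.2 p.2.2 : ℝ≥0) : ℝ≥0∞) :=
        measurable_coe_nnreal_ennreal.comp (measurable_effSum.comp
          ((measurable_snd.comp measurable_fst).prodMk (measurable_snd.comp measurable_snd)))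
      exact Measurable.lintegral_kernel_prod_right' (κ := κ)
        (f := fun p : ((X₁ ⊕ Unit) × (X₂ ⊕ Unit)) × (ℝ≥0 × ℝ≥0) =>
          ((effSum p.1.2 p.2.2 : ℝ≥0) : ℝ≥0∞)) hm
    have hmeff1 : ∀ q : (X₁ ⊕ Unit) × (X₂ ⊕ Unit),
        Measurable fun r : ℝ≥0 × ℝ≥0 => ((effSum q.1 r.1 : ℝ≥0) : ℝ≥0∞) := fun q =>
      measurable_coe_nnreal_ennreal.comp (((continuous_effSum q.1).comp continuous_fst).measurable)
    have hmeff2 : ∀ q : (X₁ ⊕ Unit) × (X₂ ⊕ Unit),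
        Measurable fun r : ℝ≥0 × ℝ≥0 => ((effSum q.2 r.2 : ℝ≥0) : ℝ≥0∞) := fun q =>
      measurable_coe_nnreal_ennreal.comp (((continuous_effSum q.2).comp continuous_snd).measurable)
    -- canonical form of T
    have hTeq : ∀ q, T q = (Cone.mk X₁ (xl X₁ q.1) (R1 q).toNNReal,
        Cone.mk X₂ (xl X₂ q.2) (R2 q).toNNReal) := by
      rintro ⟨s₁, s₂⟩
      have h1 : mkSum X₁ s₁ ((∫⁻ r : ℝ≥0 × ℝ≥0, (r.1 : ℝ≥0∞) ∂(κ (s₁, s₂))).toNNReal) =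
          Cone.mk X₁ (xl X₁ s₁) (R1 (s₁, s₂)).toNNReal := by
        cases s₁ with
        | inl x => rfl
        | inr u =>
          have hz : R1 (Sum.inr u, s₂) = 0 := by
            rw [hR1def]
            simp
          rw [hz]
          exact (Cone.mk_zero _).symm
      have h2 : mkSum X₂ s₂ ((∫⁻ r : ℝ≥0 × ℝ≥0, (r.2 : ℝ≥0∞) ∂(κ (s₁, s₂))).toNNReal) =
          Cone.mk X₂ (xl X₂ s₂) (R2 (s₁, s₂)).toNNReal := by
        cases s₂ with
        | inl x => rfl
        | inr u =>
          have hz : R2 (s₁, Sum.inr u) = 0 := by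
            rw [hR2def]
            simp
          rw [hz]
          exact (Cone.mk_zero _).symm
      rw [hTdef]
      exact Prod.ext h1 h2
    -- radial weight functions on the product cone
    have hrad1 : Measurable fun y : Cone X₁ × Cone X₂ => ((Cone.radius X₁ y.1 : ℝ≥0) : ℝ≥0∞) :=
      measurable_coe_nnreal_ennreal.comp (measurable_coneRadius.comp continuous_fst.measurable)
    have hrad2 : Measurable fun y : Cone X₁ × Cone X₂ => ((Cone.radius X₂ y.2 : ℝ≥0) : ℝ≥0∞) :=
      measurable_coe_nnreal_ennreal.comp (measurable_coneRadius.comp continuous_snd.measurable)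
    -- moment identity
    have hinner_mom : ∀ q, (∫⁻ y, ((Cone.radius X₁ y.1 : ℝ≥0∞) + (Cone.radius X₂ y.2 : ℝ≥0∞))
        ∂(F q)) = R1 q + R2 q := by
      intro q
      rw [hFdef]
      rw [lintegral_map (by exact hrad1.add hrad2 : Measurable fun y : Cone X₁ × Cone X₂ => (Cone.radius X₁ y.1 : ℝ≥0∞) + (Cone.radius X₂ y.2 : ℝ≥0∞)) (hPq q)]
      have : ∀ r : ℝ≥0 × ℝ≥0, ((Cone.radius X₁ (mkSum X₁ q.1 r.1) : ℝ≥0∞) +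
          (Cone.radius X₂ (mkSum X₂ q.2 r.2) : ℝ≥0∞)) =
          ((effSum q.1 r.1 : ℝ≥0) : ℝ≥0∞) + ((effSum q.2 r.2 : ℝ≥0) : ℝ≥0∞) := by
        intro r
        rw [radius_mkSum, radius_mkSum]
      rw [lintegral_congr this]
      exact lintegral_add_left (hmeff1 q) _
    have hαmom' : ∫⁻ y, ((Cone.radius X₁ y.1 : ℝ≥0∞) + (Cone.radius X₂ y.2 : ℝ≥0∞)) ∂α ≠ ⊤ := by
      have := hαmom
      simpa [ENNReal.rpow_one] using this
    have hmom' : ∫⁻ q, (R1 q + R2 q) ∂γ ≠ ⊤ := by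
      rw [hbindg] at hαmom'
      rw [Measure.lintegral_bind hgmeas.aemeasurable (by exact hrad1.add hrad2 : Measurable fun y : Cone X₁ × Cone X₂ => (Cone.radius X₁ y.1 : ℝ≥0∞) + (Cone.radius X₂ y.2 : ℝ≥0∞)).aemeasurable] at hαmom'
      have : ∫⁻ q, (∫⁻ y, ((Cone.radius X₁ y.1 : ℝ≥0∞) + (Cone.radius X₂ y.2 : ℝ≥0∞)) ∂(g q)) ∂γ
          = ∫⁻ q, (R1 q + R2 q) ∂γ := by
        refine lintegral_congr_ae ?_
        filter_upwards [hgae'] with q hq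
        rw [← hq, hinner_mom q]
      rw [this] at hαmom'
      exact hαmom'
    have haefin : ∀ᵐ q ∂γ, R1 q + R2 q ≠ ⊤ := by
      filter_upwards [ae_lt_top (hR1meas.add hR2meas) hmom'] with q h
      exact h.ne
    -- the positive sector and the rank-2 part
    set pos : Set (ℝ≥0 × ℝ≥0) := {r | r.1 ≠ 0 ∧ r.2 ≠ 0} with hposdef
    have hposmeas : MeasurableSet pos :=
      ((measurable_fst (measurableSet_singleton (0 : ℝ≥0))).compl).inter
        ((measurable_snd (measurableSet_singleton (0 : ℝ≥0))).compl)
    set p2 : Set ((X₁ ⊕ Unit) × (X₂ ⊕ Unit)) :=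
      {q | q.1 ∈ Set.range (Sum.inl : X₁ → X₁ ⊕ Unit) ∧
           q.2 ∈ Set.range (Sum.inl : X₂ → X₂ ⊕ Unit)} with hp2def
    have hp2meas : MeasurableSet p2 :=
      (measurable_fst measurableSet_range_inl).inter (measurable_snd measurableSet_range_inl)
    -- γ is invariant under the projected kernel; conclude fiber-exactness a.e.
    have hπF : ∀ q, (F q).map π p2 = p2.indicator (fun q => κ q pos) q := by
      intro q
      rw [hFdef]
      rw [Measure.map_map hπ (hPq q)]
      rw [Measure.map_apply (hπ.comp (hPq q)) hp2meas]
      by_cases hq : q ∈ p2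
      · have he : ((π ∘ fun r : ℝ≥0 × ℝ≥0 => ((mkSum X₁ q.1 r.1, mkSum X₂ q.2 r.2) :
            Cone X₁ × Cone X₂)) ⁻¹' p2) = pos := by
          ext r
          simp only [hπdef, hp2def, Set.mem_preimage, Function.comp_apply, Set.mem_setOf_eq,
            basePtSum_mkSum_mem, hposdef]
          constructor
          · rintro ⟨⟨_, h1⟩, ⟨_, h2⟩⟩
            exact ⟨h1, h2⟩
          · rintro ⟨h1, h2⟩
            exact ⟨⟨hq.1, h1⟩, ⟨hq.2, h2⟩⟩
        rw [Set.indicator_of_mem hq, he]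
      · have he : ((π ∘ fun r : ℝ≥0 × ℝ≥0 => ((mkSum X₁ q.1 r.1, mkSum X₂ q.2 r.2) :
            Cone X₁ × Cone X₂)) ⁻¹' p2) = ∅ := by
          ext r
          simp only [hπdef, hp2def, Set.mem_preimage, Function.comp_apply, Set.mem_setOf_eq,
            basePtSum_mkSum_mem, Set.mem_empty_iff_false, iff_false]
          rintro ⟨⟨h1, _⟩, ⟨h2, _⟩⟩
          exact hq ⟨h1, h2⟩
        rw [Set.indicator_of_notMem hq, he]
        exact measure_empty
    have hγp2 : γ p2 = ∫⁻ q in p2, κ q pos ∂γ := by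
      have h1 : γ p2 = ∫⁻ q, (g q).map π p2 ∂γ := by
        conv_lhs => rw [hγ, hbindg]
        rw [Measure.map_apply hπ hp2meas, Measure.bind_apply (hπ hp2meas) hgmeas.aemeasurable]
        refine lintegral_congr fun q => ?_
        rw [Measure.map_apply hπ hp2meas]
      rw [h1]
      have h2 : ∫⁻ q, (g q).map π p2 ∂γ = ∫⁻ q, p2.indicator (fun q => κ q pos) q ∂γ := by
        refine lintegral_congr_ae ?_
        filter_upwards [hgae'] with q hq
        rw [← hq, hπF q]
      rw [h2, lintegral_indicator hp2meas]
    have hκ1 : ∀ᵐ q ∂γ, q ∈ p2 → κ q pos = 1 := by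
      have hle : ∀ q, κ q pos ≤ 1 := fun q => prob_le_one
      have hfin2 : ∫⁻ q in p2, κ q pos ∂γ ≠ ⊤ := by
        rw [← hγp2]
        exact (measure_lt_top γ p2).ne
      have hmeasκ : Measurable fun q => κ q pos := κ.measurable_coe hposmeas
      have hzero : ∫⁻ q in p2, ((1 : ℝ≥0∞) - κ q pos) ∂γ = 0 := by
        rw [lintegral_sub hmeasκ hfin2 (Filter.Eventually.of_forall fun q => hle q)]
        rw [setLIntegral_one, ← hγp2, tsub_self]
      have hae0 := (lintegral_eq_zero_iff (measurable_const.sub hmeasκ)).mp hzero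
      have hae0' : ∀ᵐ q ∂(γ.restrict p2), (1 : ℝ≥0∞) - κ q pos = 0 := hae0
      rw [ae_restrict_iff' hp2meas] at hae0'
      filter_upwards [hae0'] with q hq hqp2
      have h0 : (1 : ℝ≥0∞) - κ q pos = 0 := hq hqp2
      exact le_antisymm (hle q) (tsub_eq_zero_iff_le.mp h0)
    -- assemble the exceptional null set
    have hae_all : ∀ᵐ q ∂γ, F q = g q ∧ (q ∈ p2 → κ q pos = 1) ∧ R1 q + R2 q ≠ ⊤ := by
      filter_upwards [hgae', hκ1, haefin] with q h1 h2 h3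
      exact ⟨h1, h2, h3⟩
    obtain ⟨N, hNsub, hNmeas, hNnull⟩ := exists_measurable_superset_of_null (ae_iff.mp hae_all)
    have hNprop : ∀ q, q ∉ N → F q = g q ∧ (q ∈ p2 → κ q pos = 1) ∧ R1 q + R2 q ≠ ⊤ := by
      intro q hq
      by_contra hcon
      exact hq (hNsub hcon)
    -- the good set
    set Ωp : Set ((X₁ ⊕ Unit) × (X₂ ⊕ Unit)) :=
      {q | (R1 q).toNNReal ≠ 0 ∧ (R2 q).toNNReal ≠ 0} with hΩpdef
    have hΩpmeas : MeasurableSet Ωp :=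
      (((ENNReal.measurable_toNNReal.comp hR1meas) (measurableSet_singleton 0)).compl).inter
        (((ENNReal.measurable_toNNReal.comp hR2meas) (measurableSet_singleton 0)).compl)
    have hΩp_p2 : Ωp ⊆ p2 := by
      rintro ⟨s₁, s₂⟩ ⟨h1, h2⟩
      constructor
      · rcases s₁ with x | u
        · exact ⟨x, rfl⟩
        · exfalso
          apply h1
          have : R1 (Sum.inr u, s₂) = 0 := by rw [hR1def]; simp
          rw [this]
          rfl
      · rcases s₂ with x | u
        · exact ⟨x, rfl⟩
        · exfalso
          apply h2
          have : R2 (s₁, Sum.inr u) = 0 := by rw [hR2def]; simp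
          rw [this]
          rfl
    set G : Set ((X₁ ⊕ Unit) × (X₂ ⊕ Unit)) := Ωp \ N with hGdef
    have hGmeas : MeasurableSet G := hΩpmeas.diff hNmeas
    -- joint measurability of the rescaled sets
    have hjoint : ∀ A : Set (Cone X₁ × Cone X₂), MeasurableSet A →
        MeasurableSet {p : (ℝ≥0 × ℝ≥0) × (Cone X₁ × Cone X₂) |
          Cone.radius X₁ p.2.1 ≠ 0 ∧ Cone.radius X₂ p.2.2 ≠ 0 ∧ rescale p ∈ A} := by
      intro A hA
      have e : {p : (ℝ≥0 × ℝ≥0) × (Cone X₁ × Cone X₂) |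
          Cone.radius X₁ p.2.1 ≠ 0 ∧ Cone.radius X₂ p.2.2 ≠ 0 ∧ rescale p ∈ A} =
          ({p : (ℝ≥0 × ℝ≥0) × (Cone X₁ × Cone X₂) | Cone.radius X₁ p.2.1 ≠ 0} ∩
           ({p | Cone.radius X₂ p.2.2 ≠ 0} ∩ (rescale ⁻¹' A))) := by
        ext p
        simp [Set.mem_setOf_eq, and_assoc]
      rw [e]
      have hm1 : Measurable fun p : (ℝ≥0 × ℝ≥0) × (Cone X₁ × Cone X₂) =>
          Cone.radius X₁ p.2.1 :=
        measurable_coneRadius.comp (continuous_fst.measurable.comp measurable_snd)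
      have hm2 : Measurable fun p : (ℝ≥0 × ℝ≥0) × (Cone X₁ × Cone X₂) =>
          Cone.radius X₂ p.2.2 :=
        measurable_coneRadius.comp (continuous_snd.measurable.comp measurable_snd)
      exact ((hm1 (measurableSet_singleton 0)).compl).inter
        (((hm2 (measurableSet_singleton 0)).compl).inter (measurable_rescale hA))
    -- the barycenter membership test
    have hSAof : ∀ (q : (X₁ ⊕ Unit) × (X₂ ⊕ Unit)) (A : Set (Cone X₁ × Cone X₂)),
        MeasurableSet A → MeasurableSet {y : Cone X₁ × Cone X₂ |
          Cone.radius X₁ y.1 ≠ 0 ∧ Cone.radius X₂ y.2 ≠ 0 ∧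
          rescale (((R1 q).toNNReal, (R2 q).toNNReal), y) ∈ A} := by
      intro q A hA
      have : {y : Cone X₁ × Cone X₂ | Cone.radius X₁ y.1 ≠ 0 ∧ Cone.radius X₂ y.2 ≠ 0 ∧
          rescale (((R1 q).toNNReal, (R2 q).toNNReal), y) ∈ A} =
          (fun y : Cone X₁ × Cone X₂ => ((((R1 q).toNNReal, (R2 q).toNNReal), y) :
          (ℝ≥0 × ℝ≥0) × (Cone X₁ × Cone X₂))) ⁻¹'
          {p : (ℝ≥0 × ℝ≥0) × (Cone X₁ × Cone X₂) |
            Cone.radius X₁ p.2.1 ≠ 0 ∧ Cone.radius X₂ p.2.2 ≠ 0 ∧ rescale p ∈ A} := rfl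
      rw [this]
      exact (measurable_const.prodMk measurable_id) (hjoint A hA)
    have hcore : ∀ q ∈ G, ∀ A : Set (Cone X₁ × Cone X₂), MeasurableSet A →
        (T q ∈ A ↔ 0 < g q {y : Cone X₁ × Cone X₂ |
          Cone.radius X₁ y.1 ≠ 0 ∧ Cone.radius X₂ y.2 ≠ 0 ∧
          rescale (((R1 q).toNNReal, (R2 q).toNNReal), y) ∈ A}) := by
      intro q hqG A hA
      obtain ⟨hqΩp, hqN⟩ := hqG
      obtain ⟨hFg, hκpos, hfin⟩ := hNprop q hqN
      have hqp2 := hΩp_p2 hqΩp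
      obtain ⟨x₁, hx₁⟩ := hqp2.1
      obtain ⟨x₂, hx₂⟩ := hqp2.2
      rw [← hFg, hFdef, Measure.map_apply (hPq q) (hSAof q A hA)]
      have hpre : ((fun r : ℝ≥0 × ℝ≥0 => ((mkSum X₁ q.1 r.1, mkSum X₂ q.2 r.2) :
          Cone X₁ × Cone X₂)) ⁻¹' {y : Cone X₁ × Cone X₂ |
          Cone.radius X₁ y.1 ≠ 0 ∧ Cone.radius X₂ y.2 ≠ 0 ∧
          rescale (((R1 q).toNNReal, (R2 q).toNNReal), y) ∈ A}) =
          {r : ℝ≥0 × ℝ≥0 | (r.1 ≠ 0 ∧ r.2 ≠ 0) ∧ T q ∈ A} := by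
        ext r
        simp only [Set.mem_preimage, Set.mem_setOf_eq, radius_mkSum]
        rw [← hx₁, ← hx₂]
        simp only [effSum_inl, mkSum_inl]
        by_cases hr1 : r.1 = 0
        · simp [hr1]
        · by_cases hr2 : r.2 = 0
          · simp [hr1, hr2]
          · simp only [hr1, hr2, ne_eq, not_false_eq_true, true_and]
            have hres : rescale (((R1 q).toNNReal, (R2 q).toNNReal),
                (Cone.mk X₁ x₁ r.1, Cone.mk X₂ x₂ r.2)) = T q := by
              simp only [rescale]
              rw [Cone.basePt_mk x₁ hr1, Cone.basePt_mk x₂ hr2, hTeq q, ← hx₁, ← hx₂]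
              rfl
            rw [hres]
      rw [hpre]
      by_cases hT : T q ∈ A
      · have : {r : ℝ≥0 × ℝ≥0 | (r.1 ≠ 0 ∧ r.2 ≠ 0) ∧ T q ∈ A} = pos := by
          ext r; simp [hposdef, hT]
        rw [this, hκpos hqp2]
        simp [hT]
      · have : {r : ℝ≥0 × ℝ≥0 | (r.1 ≠ 0 ∧ r.2 ≠ 0) ∧ T q ∈ A} = ∅ := by
          ext r; simp [hT]
        rw [this, measure_empty]
        simp [hT]
    -- measurability of the membership test
    have hΦ : ∀ A : Set (Cone X₁ × Cone X₂), MeasurableSet A →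
        Measurable fun q => g q {y : Cone X₁ × Cone X₂ |
          Cone.radius X₁ y.1 ≠ 0 ∧ Cone.radius X₂ y.2 ≠ 0 ∧
          rescale (((R1 q).toNNReal, (R2 q).toNNReal), y) ∈ A} := by
      intro A hA
      have hfmeas : Measurable fun p : ((X₁ ⊕ Unit) × (X₂ ⊕ Unit)) × (Cone X₁ × Cone X₂) =>
          Set.indicator {p' : (ℝ≥0 × ℝ≥0) × (Cone X₁ × Cone X₂) |
            Cone.radius X₁ p'.2.1 ≠ 0 ∧ Cone.radius X₂ p'.2.2 ≠ 0 ∧ rescale p' ∈ A}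
            (fun _ => (1 : ℝ≥0∞))
            ((((R1 p.1).toNNReal, (R2 p.1).toNNReal), p.2)) := by
        refine Measurable.comp (measurable_const.indicator (hjoint A hA)) ?_
        exact ((ENNReal.measurable_toNNReal.comp (hR1meas.comp measurable_fst)).prodMk
          (ENNReal.measurable_toNNReal.comp (hR2meas.comp measurable_fst))).prodMk
          measurable_snd
      have hmain : Measurable fun q => ∫⁻ y, Set.indicator
          {p' : (ℝ≥0 × ℝ≥0) × (Cone X₁ × Cone X₂) |
            Cone.radius X₁ p'.2.1 ≠ 0 ∧ Cone.radius X₂ p'.2.2 ≠ 0 ∧ rescale p' ∈ A}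
          (fun _ => (1 : ℝ≥0∞)) ((((R1 q).toNNReal, (R2 q).toNNReal), y)) ∂(Kg q) :=
        Measurable.lintegral_kernel_prod_right' (κ := Kg) hfmeas
      have heq : (fun q => g q {y : Cone X₁ × Cone X₂ |
          Cone.radius X₁ y.1 ≠ 0 ∧ Cone.radius X₂ y.2 ≠ 0 ∧
          rescale (((R1 q).toNNReal, (R2 q).toNNReal), y) ∈ A}) =
          fun q => ∫⁻ y, Set.indicator
          {p' : (ℝ≥0 × ℝ≥0) × (Cone X₁ × Cone X₂) |
            Cone.radius X₁ p'.2.1 ≠ 0 ∧ Cone.radius X₂ p'.2.2 ≠ 0 ∧ rescale p' ∈ A}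
          (fun _ => (1 : ℝ≥0∞)) ((((R1 q).toNNReal, (R2 q).toNNReal), y)) ∂(Kg q) := by
        funext q
        have h1 : (∫⁻ y, Set.indicator {p' : (ℝ≥0 × ℝ≥0) × (Cone X₁ × Cone X₂) |
              Cone.radius X₁ p'.2.1 ≠ 0 ∧ Cone.radius X₂ p'.2.2 ≠ 0 ∧ rescale p' ∈ A}
              (fun _ => (1 : ℝ≥0∞)) ((((R1 q).toNNReal, (R2 q).toNNReal), y)) ∂(Kg q)) =
            ∫⁻ y, Set.indicator {y : Cone X₁ × Cone X₂ |
              Cone.radius X₁ y.1 ≠ 0 ∧ Cone.radius X₂ y.2 ≠ 0 ∧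
              rescale (((R1 q).toNNReal, (R2 q).toNNReal), y) ∈ A}
              (fun _ => (1 : ℝ≥0∞)) y ∂(g q) := rfl
        rw [h1, lintegral_indicator (hSAof q A hA), setLIntegral_one]
      rw [heq]
      exact hmain
    -- the measurable modification of T
    set Tlow : (X₁ ⊕ Unit) × (X₂ ⊕ Unit) → Cone X₁ × Cone X₂ := fun q =>
      if (R1 q).toNNReal = 0
        then (Cone.vertex X₁, Cone.mk X₂ (xl X₂ q.2) (R2 q).toNNReal)
        else (Cone.mk X₁ (xl X₁ q.1) (R1 q).toNNReal, Cone.vertex X₂) with hTlowdef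
    have hmk1 : Measurable fun q : (X₁ ⊕ Unit) × (X₂ ⊕ Unit) =>
        Cone.mk X₁ (xl X₁ q.1) (R1 q).toNNReal :=
      measurable_coneMk.comp ((measurable_xl.comp measurable_fst).prodMk
        (ENNReal.measurable_toNNReal.comp hR1meas))
    have hmk2 : Measurable fun q : (X₁ ⊕ Unit) × (X₂ ⊕ Unit) =>
        Cone.mk X₂ (xl X₂ q.2) (R2 q).toNNReal :=
      measurable_coneMk.comp ((measurable_xl.comp measurable_snd).prodMk
        (ENNReal.measurable_toNNReal.comp hR2meas))
    have hTlowmeas : Measurable Tlow := by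
      refine Measurable.ite ((ENNReal.measurable_toNNReal.comp hR1meas)
        (measurableSet_singleton 0)) ?_ ?_
      · exact measurable_pair_const_left hmk2 _
      · exact measurable_pair_const_right hmk1 _
    set T₀ : (X₁ ⊕ Unit) × (X₂ ⊕ Unit) → Cone X₁ × Cone X₂ := fun q =>
      if q ∈ G then T q else Tlow q with hT₀def
    have hT₀meas : Measurable T₀ := by
      intro A hA
      have hsplit : T₀ ⁻¹' A = (G ∩ T ⁻¹' A) ∪ (Gᶜ ∩ Tlow ⁻¹' A) := by
        ext q
        by_cases hq : q ∈ G <;> simp [hT₀def, hq]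
      rw [hsplit]
      have hGT : G ∩ T ⁻¹' A = G ∩ {q | 0 < g q {y : Cone X₁ × Cone X₂ |
          Cone.radius X₁ y.1 ≠ 0 ∧ Cone.radius X₂ y.2 ≠ 0 ∧
          rescale (((R1 q).toNNReal, (R2 q).toNNReal), y) ∈ A}} := by
        ext q
        constructor
        · rintro ⟨h1, h2⟩
          exact ⟨h1, (hcore q h1 A hA).mp h2⟩
        · rintro ⟨h1, h2⟩
          exact ⟨h1, (hcore q h1 A hA).mpr h2⟩
      rw [hGT]
      refine MeasurableSet.union (hGmeas.inter ?_) (hGmeas.compl.inter (hTlowmeas hA))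
      exact (hΦ A hA) measurableSet_Ioi
    have hTT₀ : T =ᵐ[γ] T₀ := by
      have hsub : {q | T q ≠ T₀ q} ⊆ N := by
        intro q hq
        by_contra hqN
        apply hq
        by_cases hqΩ : q ∈ Ωp
        · have hqG : q ∈ G := ⟨hqΩ, hqN⟩
          rw [hT₀def]
          simp only [hqG, if_pos]
        · have hqG : q ∉ G := fun h => hqΩ h.1
          rw [hT₀def]
          simp only [hqG, if_neg, ite_false]
          rw [hTeq q, hTlowdef]
          by_cases h1 : (R1 q).toNNReal = 0
          · simp only [h1, if_pos]
            rw [Cone.mk_zero]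
          · have h2 : (R2 q).toNNReal = 0 := by
              by_contra h2
              exact hqΩ ⟨h1, h2⟩
            simp only [h1, if_neg, ite_false]
            rw [h2, Cone.mk_zero]
      show ∀ᵐ q ∂γ, T q = T₀ q
      rw [ae_iff]
      exact measure_mono_null hsub hNnull
    have hTae : AEMeasurable T γ := ⟨T₀, hT₀meas, hTT₀⟩
    -- ============ Part 1: the marginals ============
    have hbp1 : Measurable fun y : Cone X₁ × Cone X₂ => Cone.basePt X₁ y.1 :=
      measurable_conebasePt.comp continuous_fst.measurable
    have hbp2 : Measurable fun y : Cone X₁ × Cone X₂ => Cone.basePt X₂ y.2 :=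
      measurable_conebasePt.comp continuous_snd.measurable
    have hR1fin : ∀ᵐ q ∂γ, R1 q ≠ ⊤ := by
      filter_upwards [haefin] with q h
      exact fun hh => h (by rw [← top_le_iff]; rw [← hh]; exact le_self_add)
    have hR2fin : ∀ᵐ q ∂γ, R2 q ≠ ⊤ := by
      filter_upwards [haefin] with q h
      exact fun hh => h (by rw [← top_le_iff]; rw [← hh]; exact le_add_self)
    -- first marginal agreement
    have hmarg1 : homMarginalFst 1 (Measure.map T γ) = homMarginalFst 1 α := by
      unfold homMarginalFst
      simp only [ENNReal.rpow_one]
      refine Measure.ext fun v hv => ?_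
      set W : Cone X₁ × Cone X₂ → ℝ≥0∞ := Set.indicator
        ((fun y : Cone X₁ × Cone X₂ => Cone.basePt X₁ y.1) ⁻¹' v)
        (fun y => ((Cone.radius X₁ y.1 : ℝ≥0) : ℝ≥0∞)) with hWdef
      have hWmeas : Measurable W := hrad1.indicator (hbp1 hv)
      have hWpt : ∀ (x : X₁) (ρ : ℝ≥0) (c : Cone X₂),
          W (Cone.mk X₁ x ρ, c) = Set.indicator v (fun _ => (1 : ℝ≥0∞)) x * (ρ : ℝ≥0∞) := by
        intro x ρ c
        by_cases hρ : ρ = 0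
        · subst hρ
          rw [hWdef]
          by_cases hm : (Cone.mk X₁ x 0, c) ∈
              (fun y : Cone X₁ × Cone X₂ => Cone.basePt X₁ y.1) ⁻¹' v
          · rw [Set.indicator_of_mem hm]
            simp
          · rw [Set.indicator_of_notMem hm]
            simp
        · rw [hWdef]
          by_cases hm : x ∈ v
          · rw [Set.indicator_of_mem (by
              show Cone.basePt X₁ (Cone.mk X₁ x ρ, c).1 ∈ v
              rw [Cone.basePt_mk x hρ]; exact hm), Set.indicator_of_mem hm]
            simp [Cone.radius_mk]
          · rw [Set.indicator_of_notMem (by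
              show ¬ Cone.basePt X₁ (Cone.mk X₁ x ρ, c).1 ∈ v
              rw [Cone.basePt_mk x hρ]; exact hm), Set.indicator_of_notMem hm]
            simp
      rw [Measure.map_apply hbp1 hv, Measure.map_apply hbp1 hv,
        withDensity_apply _ (hbp1 hv), withDensity_apply _ (hbp1 hv),
        ← lintegral_indicator (hbp1 hv), ← lintegral_indicator (hbp1 hv)]
      rw [lintegral_map' hWmeas.aemeasurable hTae]
      conv_rhs => rw [hbindg]
      rw [Measure.lintegral_bind hgmeas.aemeasurable hWmeas.aemeasurable]
      have hLHS : ∫⁻ q, W (T q) ∂γ =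
          ∫⁻ q, Set.indicator v (fun _ => (1 : ℝ≥0∞)) (xl X₁ q.1) * R1 q ∂γ := by
        refine lintegral_congr_ae ?_
        filter_upwards [hR1fin] with q hfin
        rw [hTeq q, hWpt, ENNReal.coe_toNNReal hfin]
      have hRHS : ∫⁻ q, (∫⁻ y, W y ∂(g q)) ∂γ =
          ∫⁻ q, Set.indicator v (fun _ => (1 : ℝ≥0∞)) (xl X₁ q.1) * R1 q ∂γ := by
        refine lintegral_congr_ae ?_
        filter_upwards [hgae'] with q hFg
        rw [← hFg, hFdef, lintegral_map hWmeas (hPq q)]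
        have hpt : ∀ r : ℝ≥0 × ℝ≥0, W (mkSum X₁ q.1 r.1, mkSum X₂ q.2 r.2) =
            Set.indicator v (fun _ => (1 : ℝ≥0∞)) (xl X₁ q.1) *
            ((effSum q.1 r.1 : ℝ≥0) : ℝ≥0∞) := by
          intro r
          rw [mkSum_eq_mk, mkSum_eq_mk, hWpt]
        rw [lintegral_congr hpt, lintegral_const_mul _ (hmeff1 q)]
      rw [hLHS, hRHS]
    -- second marginal agreement
    have hmarg2 : homMarginalSnd 1 (Measure.map T γ) = homMarginalSnd 1 α := by
      unfold homMarginalSnd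
      simp only [ENNReal.rpow_one]
      refine Measure.ext fun v hv => ?_
      set W : Cone X₁ × Cone X₂ → ℝ≥0∞ := Set.indicator
        ((fun y : Cone X₁ × Cone X₂ => Cone.basePt X₂ y.2) ⁻¹' v)
        (fun y => ((Cone.radius X₂ y.2 : ℝ≥0) : ℝ≥0∞)) with hWdef
      have hWmeas : Measurable W := hrad2.indicator (hbp2 hv)
      have hWpt : ∀ (x : X₂) (ρ : ℝ≥0) (c : Cone X₁),
          W (c, Cone.mk X₂ x ρ) = Set.indicator v (fun _ => (1 : ℝ≥0∞)) x * (ρ : ℝ≥0∞) := by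
        intro x ρ c
        by_cases hρ : ρ = 0
        · subst hρ
          rw [hWdef]
          by_cases hm : ((c, Cone.mk X₂ x 0) : Cone X₁ × Cone X₂) ∈
              (fun y : Cone X₁ × Cone X₂ => Cone.basePt X₂ y.2) ⁻¹' v
          · rw [Set.indicator_of_mem hm]
            simp
          · rw [Set.indicator_of_notMem hm]
            simp
        · rw [hWdef]
          by_cases hm : x ∈ v
          · rw [Set.indicator_of_mem (by
              show Cone.basePt X₂ ((c, Cone.mk X₂ x ρ) : Cone X₁ × Cone X₂).2 ∈ v
              rw [Cone.basePt_mk x hρ]; exact hm), Set.indicator_of_mem hm]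
            simp [Cone.radius_mk]
          · rw [Set.indicator_of_notMem (by
              show ¬ Cone.basePt X₂ ((c, Cone.mk X₂ x ρ) : Cone X₁ × Cone X₂).2 ∈ v
              rw [Cone.basePt_mk x hρ]; exact hm), Set.indicator_of_notMem hm]
            simp
      rw [Measure.map_apply hbp2 hv, Measure.map_apply hbp2 hv,
        withDensity_apply _ (hbp2 hv), withDensity_apply _ (hbp2 hv),
        ← lintegral_indicator (hbp2 hv), ← lintegral_indicator (hbp2 hv)]
      rw [lintegral_map' hWmeas.aemeasurable hTae]
      conv_rhs => rw [hbindg]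
      rw [Measure.lintegral_bind hgmeas.aemeasurable hWmeas.aemeasurable]
      have hLHS : ∫⁻ q, W (T q) ∂γ =
          ∫⁻ q, Set.indicator v (fun _ => (1 : ℝ≥0∞)) (xl X₂ q.2) * R2 q ∂γ := by
        refine lintegral_congr_ae ?_
        filter_upwards [hR2fin] with q hfin
        rw [hTeq q, hWpt, ENNReal.coe_toNNReal hfin]
      have hRHS : ∫⁻ q, (∫⁻ y, W y ∂(g q)) ∂γ =
          ∫⁻ q, Set.indicator v (fun _ => (1 : ℝ≥0∞)) (xl X₂ q.2) * R2 q ∂γ := by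
        refine lintegral_congr_ae ?_
        filter_upwards [hgae'] with q hFg
        rw [← hFg, hFdef, lintegral_map hWmeas (hPq q)]
        have hpt : ∀ r : ℝ≥0 × ℝ≥0, W (mkSum X₁ q.1 r.1, mkSum X₂ q.2 r.2) =
            Set.indicator v (fun _ => (1 : ℝ≥0∞)) (xl X₂ q.2) *
            ((effSum q.2 r.2 : ℝ≥0) : ℝ≥0∞) := by
          intro r
          rw [mkSum_eq_mk, mkSum_eq_mk, hWpt]
        rw [lintegral_congr hpt, lintegral_const_mul _ (hmeff2 q)]
      rw [hLHS, hRHS]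
    -- moment bound for the projected plan
    have hmomb : (∫⁻ y, ((Cone.radius X₁ y.1 : ℝ≥0∞) + (Cone.radius X₂ y.2 : ℝ≥0∞))
        ∂(Measure.map T γ)) ≠ ⊤ := by
      rw [lintegral_map' (by exact hrad1.add hrad2 : Measurable fun y : Cone X₁ × Cone X₂ => (Cone.radius X₁ y.1 : ℝ≥0∞) + (Cone.radius X₂ y.2 : ℝ≥0∞)).aemeasurable hTae]
      refine ne_top_of_le_ne_top hmom' (lintegral_mono fun q => ?_)
      rw [hTeq q]
      exact add_le_add (by simpa [Cone.radius_mk] using ENNReal.coe_toNNReal_le_self)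
        (by simpa [Cone.radius_mk] using ENNReal.coe_toNNReal_le_self)
    refine ⟨⟨?_, ?_, ?_, ?_⟩, ?_⟩
    · refine ⟨?_⟩
      rw [Measure.map_apply_of_aemeasurable hTae MeasurableSet.univ]
      exact measure_lt_top γ _
    · simpa [ENNReal.rpow_one] using hmomb
    · rw [← hμ₁]
      exact hmarg1
    · rw [← hμ₂]
      exact hmarg2
    -- ============ Part 2: Jensen ============
    · intro hconv
      have hHmeas : Measurable H := hlsc.measurable
      rw [lintegral_map' hHmeas.aemeasurable hTae]
      conv_rhs => rw [hbindg]
      rw [Measure.lintegral_bind hgmeas.aemeasurable hHmeas.aemeasurable]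
      refine lintegral_mono_ae ?_
      filter_upwards [hgae', haefin] with q hFg hfin
      rw [← hFg, hFdef, lintegral_map hHmeas (hPq q)]
      have hmeff : Measurable fun r : ℝ≥0 × ℝ≥0 => (effSum q.1 r.1, effSum q.2 r.2) :=
        (((continuous_effSum q.1).comp continuous_fst).prodMk
          ((continuous_effSum q.2).comp continuous_snd)).measurable
      set ν : Measure (ℝ≥0 × ℝ≥0) :=
        Measure.map (fun r : ℝ≥0 × ℝ≥0 => (effSum q.1 r.1, effSum q.2 r.2)) (κ q) with hνdef
      haveI : IsProbabilityMeasure ν := Measure.isProbabilityMeasure_map hmeff.aemeasurable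
      have hν1 : ∫⁻ s, (s.1 : ℝ≥0∞) ∂ν = R1 q := by
        rw [hνdef, lintegral_map (f := fun s : ℝ≥0 × ℝ≥0 => (s.1 : ℝ≥0∞))
          (measurable_coe_nnreal_ennreal.comp measurable_fst) hmeff]
      have hν2 : ∫⁻ s, (s.2 : ℝ≥0∞) ∂ν = R2 q := by
        rw [hνdef, lintegral_map (f := fun s : ℝ≥0 × ℝ≥0 => (s.2 : ℝ≥0∞))
          (measurable_coe_nnreal_ennreal.comp measurable_snd) hmeff]
      have hfin1 : R1 q ≠ ⊤ := fun hh => hfin (by rw [← top_le_iff, ← hh]; exact le_self_add)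
      have hfin2 : R2 q ≠ ⊤ := fun hh => hfin (by rw [← top_le_iff, ← hh]; exact le_add_self)
      have hJ := jensen_fiber H hlsc hconv (xl X₁ q.1) (xl X₂ q.2) ν
        (by rw [hν1]; exact hfin1) (by rw [hν2]; exact hfin2)
      have hRHS : ∫⁻ s, H (Cone.mk X₁ (xl X₁ q.1) s.1, Cone.mk X₂ (xl X₂ q.2) s.2) ∂ν =
          ∫⁻ r, H (mkSum X₁ q.1 r.1, mkSum X₂ q.2 r.2) ∂(κ q) := by
        rw [hνdef]
        have hcont2 : Continuous fun s : ℝ≥0 × ℝ≥0 =>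
            ((Cone.mk X₁ (xl X₁ q.1) s.1, Cone.mk X₂ (xl X₂ q.2) s.2) : Cone X₁ × Cone X₂) := by
          refine Continuous.prodMk ?_ ?_
          · exact continuous_coneMk.comp (continuous_const.prodMk continuous_fst)
          · exact continuous_coneMk.comp (continuous_const.prodMk continuous_snd)
        rw [lintegral_map (f := fun s : ℝ≥0 × ℝ≥0 =>
          H (Cone.mk X₁ (xl X₁ q.1) s.1, Cone.mk X₂ (xl X₂ q.2) s.2))
          (hHmeas.comp hcont2.measurable) hmeff]
        refine lintegral_congr fun r => ?_
        rw [mkSum_eq_mk, mkSum_eq_mk]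
      rw [hRHS] at hJ
      have hLHS : H (T q) = H (Cone.mk X₁ (xl X₁ q.1) (∫⁻ s, (s.1 : ℝ≥0∞) ∂ν).toNNReal,
          Cone.mk X₂ (xl X₂ q.2) (∫⁻ s, (s.2 : ℝ≥0∞) ∂ν).toNNReal) := by
        rw [hTeq q, hν1, hν2]
      rw [hLHS]
      exact hJ


end UOT
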